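/- arXiv:1611.09109 — 8 statements merged into one kernel-verified Lean document; each statement's English description precedes it below -/
import Mathlib

section
/- There is no regular closed curve in the hyperbolic plane whose geodesic curvature is bounded by 1 in absolute value. Precisely: there is no C² curve γ : [0,1] → ℂ with γ'(t) ≠ 0 and Im γ(t) > 0 for all t, satisfying γ(1) = γ(0) and γ'(1) = γ'(0), whose hyperbolic geodesic curvature satisfies |κ(t)| ≤ 1 for all t ∈ [0,1]. -/
open Set

/-- Euclidean curvature of a plane curve `γ : ℝ → ℂ`. -/
noncomputable def kappaE (γ : ℝ → ℂ) (t : ℝ) : ℝ :=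
  ((starRingEnd ℂ) (deriv γ t) * deriv (deriv γ) t).im / ‖deriv γ t‖ ^ 3

/-- Hyperbolic geodesic curvature in the upper half-plane model. -/
noncomputable def kappaH (γ : ℝ → ℂ) (t : ℝ) : ℝ :=
  (γ t).im * kappaE γ t + (deriv γ t).re / ‖deriv γ t‖

/-!
The function `ψ = d(1 / Im γ)/ds`, with `s` the hyperbolic arclength, has `t`-derivative
`(|γ'| - κ Re γ') / (Im γ)²`, which is nonnegative when `|κ| ≤ 1`. On a closed curve `ψ` takes
the same value at both ends, so it is constant and its derivative vanishes: `|γ'| = κ Re γ'`,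
which forces `Im γ' = 0`. Rolle's theorem applied to `Re γ` then produces a point where `γ' = 0`.
-/

open Filter Topology

theorem HasDerivAt.norm {F : Type*} [NormedAddCommGroup F] [InnerProductSpace ℝ F]
    {f : ℝ → F} {f' : F} {x : ℝ} (hf : HasDerivAt f f' x) (h0 : f x ≠ 0) :
    HasDerivAt (fun y => ‖f y‖) (Inner.inner ℝ (f x) f' / ‖f x‖) x := by
  have h := hf.norm_sq.sqrt (by positivity)
  simp only [Real.sqrt_sq (norm_nonneg _)] at h
  convert h using 1
  field_simp

theorem HasDerivAt.complex_re {f : ℝ → ℂ} {f' : ℂ} {x : ℝ} (hf : HasDerivAt f f' x) :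
    HasDerivAt (fun y => (f y).re) f'.re x :=
  Complex.reCLM.hasFDerivAt.comp_hasDerivAt x hf

theorem HasDerivAt.complex_im {f : ℝ → ℂ} {f' : ℂ} {x : ℝ} (hf : HasDerivAt f f' x) :
    HasDerivAt (fun y => (f y).im) f'.im x :=
  Complex.imCLM.hasFDerivAt.comp_hasDerivAt x hf

theorem MonotoneOn.eqOn_Icc_of_eq {f : ℝ → ℝ} {a b : ℝ} (hf : MonotoneOn f (Icc a b))
    (hab : f a = f b) : EqOn f (fun _ => f a) (Icc a b) := fun _ hx =>
  le_antisymm (hab ▸ hf hx (right_mem_Icc.2 (hx.1.trans hx.2)) hx.2)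
    (hf (left_mem_Icc.2 (hx.1.trans hx.2)) hx hx.1)

theorem HasDerivAt.eq_zero_of_monotoneOn_Icc {f : ℝ → ℝ} {f' a b t : ℝ}
    (hd : HasDerivAt f f' t) (hf : MonotoneOn f (Icc a b)) (hab : f a = f b)
    (ht : t ∈ Ioo a b) : f' = 0 := by
  have hconst : f =ᶠ[𝓝 t] fun _ => f a :=
    eventuallyEq_of_mem (Icc_mem_nhds ht.1 ht.2) (hf.eqOn_Icc_of_eq hab)
  exact hd.unique ((hasDerivAt_const t (f a)).congr_of_eventuallyEq hconst)

theorem mul_le_abs_of_abs_le_one {κ x : ℝ} (hκ : |κ| ≤ 1) : κ * x ≤ |x| :=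
  calc κ * x ≤ |κ| * |x| := abs_mul κ x ▸ le_abs_self _
    _ ≤ |x| := mul_le_of_le_one_left (abs_nonneg x) hκ

theorem Complex.im_eq_zero_of_norm_eq_mul_re {κ : ℝ} {z : ℂ} (hκ : |κ| ≤ 1)
    (h : ‖z‖ = κ * z.re) : z.im = 0 :=
  abs_re_eq_norm.1 <| le_antisymm (abs_re_le_norm z) (h ▸ mul_le_abs_of_abs_le_one hκ)

/-- `d(1 / Im γ)/ds` for the hyperbolic arclength `s`, since `ds/dt = |γ'| / Im γ`. -/
noncomputable def arclengthDerivInvIm (γ : ℝ → ℂ) (t : ℝ) : ℝ :=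
  -(deriv γ t).im / ((γ t).im * ‖deriv γ t‖)

theorem hasDerivAt_arclengthDerivInvIm {γ : ℝ → ℂ} {t : ℝ} (hγ : DifferentiableAt ℝ γ t)
    (hγ' : DifferentiableAt ℝ (deriv γ) t) (hreg : deriv γ t ≠ 0) (him : (γ t).im ≠ 0) :
    HasDerivAt (arclengthDerivInvIm γ)
      ((‖deriv γ t‖ - kappaH γ t * (deriv γ t).re) / (γ t).im ^ 2) t := by
  have h := (HasDerivAt.complex_im hγ'.hasDerivAt).fun_neg.fun_div
    ((HasDerivAt.complex_im hγ.hasDerivAt).fun_mul (HasDerivAt.norm hγ'.hasDerivAt hreg))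
    (mul_ne_zero him (norm_ne_zero_iff.2 hreg))
  refine h.congr_deriv ?_
  have hsq : ‖deriv γ t‖ ^ 2 = (deriv γ t).re ^ 2 + (deriv γ t).im ^ 2 := by
    rw [Complex.sq_norm, Complex.normSq_apply]; ring
  simp only [kappaH, kappaE, Complex.inner, Complex.mul_im, Complex.mul_re, Complex.conj_re,
    Complex.conj_im]
  field_simp
  linear_combination (-((deriv (deriv γ) t).im * (γ t).im + ‖deriv γ t‖ ^ 2)) * hsq

theorem monotoneOn_arclengthDerivInvIm {γ : ℝ → ℂ} {D : Set ℝ} (hD : Convex ℝ D)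
    (hγ : ContDiff ℝ 2 γ) (hreg : ∀ t ∈ D, deriv γ t ≠ 0) (him : ∀ t ∈ D, (γ t).im ≠ 0)
    (hκ : ∀ t ∈ D, |kappaH γ t| ≤ 1) : MonotoneOn (arclengthDerivInvIm γ) D := by
  have hψ : ∀ t ∈ D, HasDerivAt (arclengthDerivInvIm γ)
      ((‖deriv γ t‖ - kappaH γ t * (deriv γ t).re) / (γ t).im ^ 2) t := fun t ht =>
    hasDerivAt_arclengthDerivInvIm (hγ.differentiable two_ne_zero t)
      (hγ.differentiable_deriv_two t) (hreg t ht) (him t ht)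
  refine monotoneOn_of_hasDerivWithinAt_nonneg hD
    (fun t ht => (hψ t ht).continuousAt.continuousWithinAt)
    (fun t ht => (hψ t (interior_subset ht)).hasDerivWithinAt) fun t ht => ?_
  have hκre := mul_le_abs_of_abs_le_one (x := (deriv γ t).re) (hκ t (interior_subset ht))
  have hre := Complex.abs_re_le_norm (deriv γ t)
  exact div_nonneg (by linarith) (sq_nonneg _)

/-- There is no regular closed curve in the hyperbolic plane whose geodesic curvature
is bounded by `1` in absolute value. -/
theorem no_closed_curve_of_small_curvature :
    ¬ ∃ γ : ℝ → ℂ, ContDiff ℝ 2 γ ∧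
      (∀ t ∈ Icc (0:ℝ) 1, deriv γ t ≠ 0) ∧
      (∀ t ∈ Icc (0:ℝ) 1, 0 < (γ t).im) ∧
      (∀ t ∈ Icc (0:ℝ) 1, |kappaH γ t| ≤ 1) ∧
      γ 1 = γ 0 ∧ deriv γ 1 = deriv γ 0 := by
  rintro ⟨γ, hγ, hreg, him, hκ, hγ01, hγ'01⟩
  replace him : ∀ t ∈ Icc (0:ℝ) 1, (γ t).im ≠ 0 := fun t ht => (him t ht).ne'
  have hψ := monotoneOn_arclengthDerivInvIm (convex_Icc 0 1) hγ hreg him hκ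
  have hψ01 : arclengthDerivInvIm γ 0 = arclengthDerivInvIm γ 1 := by
    simp only [arclengthDerivInvIm, hγ01, hγ'01]
  have hre : ∀ t, HasDerivAt (fun s => (γ s).re) (deriv γ t).re t := fun t =>
    HasDerivAt.complex_re (hγ.differentiable two_ne_zero t).hasDerivAt
  obtain ⟨t, ht, hre0⟩ := exists_hasDerivAt_eq_zero zero_lt_one
    (fun s _ => (hre s).continuousAt.continuousWithinAt) (by rw [hγ01]) fun s _ => hre s
  have ht' := Ioo_subset_Icc_self ht
  have hψ't := (hasDerivAt_arclengthDerivInvIm (hγ.differentiable two_ne_zero t)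
    (hγ.differentiable_deriv_two t) (hreg t ht') (him t ht')).eq_zero_of_monotoneOn_Icc
      hψ hψ01 ht
  rw [div_eq_zero_iff, sub_eq_zero, or_iff_left (pow_ne_zero 2 (him t ht'))] at hψ't
  exact hreg t ht' (Complex.ext hre0 (Complex.im_eq_zero_of_norm_eq_mul_re (hκ t ht') hψ't))
end

section
/- (Attainable endpoints.) Let κ₁ < κ₂ be real numbers with κ₂ > 1 or κ₁ < −1. Then for any p, q ∈ ℂ with Im p > 0 and Im q > 0, and any w₀, w₁ ∈ ℂ with |w₀| = |w₁| = 1, there exists a C^∞ regular curve γ : [0,1] → ℂ with Im γ(t) > 0 for all t, such that γ(0) = p, γ(1) = q, γ'(0)/|γ'(0)| = w₀, γ'(1)/|γ'(1)| = w₁, and κ₁ < κ(t) < κ₂ for all t ∈ [0,1]. -/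
set_option maxHeartbeats 1000000


open Set

/-- `θ` is a continuous argument for the unit tangent of `γ` on `[0,1]`. -/
def IsArgument (γ : ℝ → ℂ) (θ : ℝ → ℝ) : Prop :=
  ContinuousOn θ (Icc 0 1) ∧
  ∀ t ∈ Icc (0:ℝ) 1,
    deriv γ t / (‖deriv γ t‖ : ℂ) = Complex.exp (θ t * Complex.I)

noncomputable def Sf (t : ℝ) : ℝ := 3*t^2 - 2*t^3
noncomputable def Uf (t : ℝ) : ℝ := 6*t - 6*t^2
noncomputable def Rf (R₀ R₁ t : ℝ) : ℝ := R₀ + Sf t * (R₁ - R₀)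

lemma Sf_mem {t : ℝ} (h : t ∈ Icc (0:ℝ) 1) : Sf t ∈ Icc (0:ℝ) 1 := by
  obtain ⟨h0, h1⟩ := h
  unfold Sf
  constructor
  · nlinarith
  · nlinarith [sq_nonneg (1-t), mul_nonneg (mul_nonneg h0 h0) h0]

lemma Uf_mem {t : ℝ} (h : t ∈ Icc (0:ℝ) 1) : Uf t ∈ Icc (0:ℝ) (3/2) := by
  obtain ⟨h0, h1⟩ := h
  unfold Uf
  constructor
  · nlinarith
  · nlinarith [sq_nonneg (2*t-1)]

lemma Rf_mem {R₀ R₁ : ℝ} {t : ℝ} (h : t ∈ Icc (0:ℝ) 1) :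
    Rf R₀ R₁ t ∈ Icc (min R₀ R₁) (max R₀ R₁) := by
  obtain ⟨hs0, hs1⟩ := Sf_mem h
  unfold Rf
  constructor
  · nlinarith [min_le_left R₀ R₁, min_le_right R₀ R₁]
  · nlinarith [le_max_left R₀ R₁, le_max_right R₀ R₁]

noncomputable def PhiV (σ R₀ R₁ : ℝ) (dz : ℂ) (x : ℝ × ℂ × ℝ) : ℂ :=
  ((x.2.2 * Uf x.1 : ℝ) : ℂ) * (dz + ((R₁ - R₀ : ℝ) : ℂ) * x.2.1)
    + ((σ : ℝ) : ℂ) * Complex.I * ((Rf R₀ R₁ x.1 : ℝ) : ℂ) * x.2.1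

noncomputable def PhiW (σ R₀ R₁ : ℝ) (dz : ℂ) (x : ℝ × ℂ × ℝ) : ℂ :=
  ((x.2.2^2 * (6 - 12*x.1) : ℝ) : ℂ) * (dz + ((R₁ - R₀ : ℝ) : ℂ) * x.2.1)
    + 2 * ((σ : ℝ) : ℂ) * Complex.I * ((x.2.2 * Uf x.1 * (R₁ - R₀) : ℝ) : ℂ) * x.2.1
    - ((Rf R₀ R₁ x.1 : ℝ) : ℂ) * x.2.1

noncomputable def Phi (σ c R₀ R₁ : ℝ) (dz : ℂ) (x : ℝ × ℂ × ℝ) : ℝ :=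
  (σ * c * Rf R₀ R₁ x.1 + Rf R₀ R₁ x.1 * x.2.1.im)
      * ((starRingEnd ℂ) (PhiV σ R₀ R₁ dz x) * PhiW σ R₀ R₁ dz x).im
      / ‖PhiV σ R₀ R₁ dz x‖ ^ 3
    + (PhiV σ R₀ R₁ dz x).re / ‖PhiV σ R₀ R₁ dz x‖

lemma phiV_cont (σ R₀ R₁ : ℝ) (dz : ℂ) : Continuous (PhiV σ R₀ R₁ dz) := by
  unfold PhiV Rf Sf Uf; fun_prop

lemma phiW_cont (σ R₀ R₁ : ℝ) (dz : ℂ) : Continuous (PhiW σ R₀ R₁ dz) := by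
  unfold PhiW Rf Sf Uf; fun_prop

lemma phi_contOn (σ c R₀ R₁ : ℝ) (dz : ℂ) (s : Set (ℝ × ℂ × ℝ))
    (hV : ∀ x ∈ s, PhiV σ R₀ R₁ dz x ≠ 0) : ContinuousOn (Phi σ c R₀ R₁ dz) s := by
  have h1 := phiV_cont σ R₀ R₁ dz
  have h2 := phiW_cont σ R₀ R₁ dz
  apply ContinuousOn.add
  · apply ContinuousOn.div
    · apply Continuous.continuousOn
      apply Continuous.mul
      · unfold Rf Sf; fun_prop
      · exact Complex.continuous_im.comp ((Complex.continuous_conj.comp h1).mul h2)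
    · exact ((continuous_norm.comp h1).pow 3).continuousOn
    · intro x hx
      exact pow_ne_zero _ (norm_ne_zero_iff.mpr (hV x hx))
  · exact ContinuousOn.div (Complex.continuous_re.comp h1).continuousOn
      (continuous_norm.comp h1).continuousOn
      (fun x hx => norm_ne_zero_iff.mpr (hV x hx))

lemma phiV_lower (σ R₀ R₁ : ℝ) (dz : ℂ) (hσ : σ = 1 ∨ σ = -1) (hR₀ : 0 < R₀) (hR₁ : 0 < R₁)
    {x : ℝ × ℂ × ℝ} (ht : x.1 ∈ Icc (0:ℝ) 1) (hw : ‖x.2.1‖ = 1)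
    (he0 : 0 ≤ x.2.2) (he1 : x.2.2 ≤ min R₀ R₁ / (3*(‖dz‖ + |R₁ - R₀| + 1))) :
    min R₀ R₁ / 2 ≤ ‖PhiV σ R₀ R₁ dz x‖ := by
  obtain ⟨t, w, e⟩ := x
  simp only at ht hw he0 he1 ⊢
  set M : ℝ := ‖dz‖ + |R₁ - R₀| with hM
  have hM0 : 0 ≤ ‖dz‖ + |R₁ - R₀| := by positivity
  have hRmin : 0 < min R₀ R₁ := lt_min hR₀ hR₁
  have hsabs : |σ| = 1 := by rcases hσ with h | h <;> simp [h]
  obtain ⟨hu0, hu1⟩ := Uf_mem ht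
  obtain ⟨hRl, hRu⟩ := Rf_mem (R₀ := R₀) (R₁ := R₁) ht
  set C : ℂ := ((e * Uf t : ℝ) : ℂ) * (dz + ((R₁ - R₀ : ℝ) : ℂ) * w) with hC
  set B : ℂ := ((σ : ℝ) : ℂ) * Complex.I * ((Rf R₀ R₁ t : ℝ) : ℂ) * w with hB
  have hVx : PhiV σ R₀ R₁ dz (t, w, e) = C + B := rfl
  have habsB : ‖B‖ = Rf R₀ R₁ t := by
    rw [hB]
    simp only [norm_mul, Complex.norm_real, Real.norm_eq_abs, Complex.norm_I, hw, hsabs]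
    rw [abs_of_pos (lt_of_lt_of_le hRmin hRl)]
    ring
  have habsC : ‖C‖ ≤ e * (3/2) * M := by
    rw [hC]
    rw [norm_mul]
    have h1 : ‖((e * Uf t : ℝ) : ℂ)‖ = e * Uf t := by
      rw [Complex.norm_real, Real.norm_eq_abs, _root_.abs_of_nonneg (mul_nonneg he0 hu0)]
    have h2 : ‖dz + ((R₁ - R₀ : ℝ) : ℂ) * w‖ ≤ M := by
      calc ‖dz + ((R₁ - R₀ : ℝ) : ℂ) * w‖
          ≤ ‖dz‖ + ‖((R₁ - R₀ : ℝ) : ℂ) * w‖ := norm_add_le _ _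
        _ = M := by rw [norm_mul, Complex.norm_real, Real.norm_eq_abs, hw, mul_one, hM]
    calc ‖((e * Uf t : ℝ) : ℂ)‖ * ‖dz + ((R₁ - R₀ : ℝ) : ℂ) * w‖
        ≤ (e * Uf t) * M := by rw [h1]; exact mul_le_mul_of_nonneg_left h2 (by positivity)
      _ ≤ e * (3/2) * M := by
          nlinarith [mul_nonneg he0 hM0,
            mul_nonneg (mul_nonneg he0 hM0) (by linarith : (0:ℝ) ≤ 3/2 - Uf t)]
  have htri : ‖B‖ ≤ ‖C + B‖ + ‖C‖ := by
    calc ‖B‖ = ‖(C + B) + (-C)‖ := by congr 1; ring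
      _ ≤ ‖C + B‖ + ‖-C‖ := norm_add_le _ _
      _ = ‖C + B‖ + ‖C‖ := by rw [norm_neg]
  rw [hVx]
  have heM : e * (3/2) * M ≤ min R₀ R₁ / 2 := by
    have h4 : e * M ≤ min R₀ R₁ / (3*(M+1)) * M := by
      apply mul_le_mul_of_nonneg_right he1 hM0
    have h3 : min R₀ R₁ / (3*(M+1)) * M ≤ min R₀ R₁ / 3 := by
      rw [div_mul_eq_mul_div, div_le_div_iff₀ (by positivity) (by norm_num)]
      nlinarith
    nlinarith
  linarith [habsB, habsC, htri, hRl]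

lemma phi_zero (σ c R₀ R₁ : ℝ) (dz : ℂ) (t : ℝ) (w : ℂ) (hw : ‖w‖ = 1)
    (hσ : σ = 1 ∨ σ = -1) (hR : 0 < Rf R₀ R₁ t) :
    Phi σ c R₀ R₁ dz (t, w, 0) = c := by
  have hw2 : w.re^2 + w.im^2 = 1 := by
    have h := Complex.sq_norm w
    rw [hw] at h
    simpa [Complex.normSq_apply, sq] using h.symm
  set R := Rf R₀ R₁ t with hRdef
  have hV : PhiV σ R₀ R₁ dz (t, w, 0) = ((σ : ℝ) : ℂ) * Complex.I * (R : ℂ) * w := by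
    simp [PhiV, hRdef]
  have hW : PhiW σ R₀ R₁ dz (t, w, 0) = -((R : ℝ) : ℂ) * w := by
    simp [PhiW, hRdef]
  have habs : ‖((σ : ℝ) : ℂ) * Complex.I * (R : ℂ) * w‖ = R := by
    have hs : |σ| = 1 := by rcases hσ with h | h <;> simp [h]
    simp [norm_mul, hs, abs_of_pos hR, hw]
  unfold Phi
  rw [hV, hW, habs]
  have h1 : ((starRingEnd ℂ) (((σ : ℝ) : ℂ) * Complex.I * (R : ℂ) * w) * (-((R : ℝ) : ℂ) * w)).im
      = σ * R^2 * (w.re^2 + w.im^2) := by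
    simp [Complex.mul_im, Complex.mul_re, Complex.conj_re, Complex.conj_im]
    ring
  rw [h1, hw2]
  have h2 : ((((σ : ℝ) : ℂ) * Complex.I * (R : ℂ) * w)).re = -(σ * R * w.im) := by
    simp [Complex.mul_re, Complex.mul_im]
  rw [h2]
  rcases hσ with h | h <;> subst h <;> field_simp <;> ring

theorem attainable_endpoints_aux (κ₁ κ₂ σ c : ℝ) (hσ : σ = 1 ∨ σ = -1) (hsc : 1 < σ * c)
    (hcκ₁ : κ₁ < c) (hcκ₂ : c < κ₂)
    (p q : ℂ) (hp : 0 < p.im) (hq : 0 < q.im)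
    (w₀ w₁ : ℂ) (hw₀ : ‖w₀‖ = 1) (hw₁ : ‖w₁‖ = 1) :
    ∃ γ : ℝ → ℂ, ContDiff ℝ (⊤ : ℕ∞) γ ∧
      (∀ t ∈ Icc (0:ℝ) 1,
        deriv γ t ≠ 0 ∧ 0 < (γ t).im ∧ κ₁ < kappaH γ t ∧ kappaH γ t < κ₂) ∧
      γ 0 = p ∧ γ 1 = q ∧
      deriv γ 0 / (‖deriv γ 0‖ : ℂ) = w₀ ∧
      deriv γ 1 / (‖deriv γ 1‖ : ℂ) = w₁ := by
  have hσ2 : σ^2 = 1 := by rcases hσ with h|h <;> rw [h] <;> norm_num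
  have hσabs : |σ| = 1 := by rcases hσ with h|h <;> rw [h] <;> norm_num
  -- radii
  have hre0 : |w₀.re| ≤ 1 := by rw [← hw₀]; exact Complex.abs_re_le_norm w₀
  have hre1 : |w₁.re| ≤ 1 := by rw [← hw₁]; exact Complex.abs_re_le_norm w₁
  have hden0 : 0 < σ*c - σ*w₀.re := by
    have h1 : σ*w₀.re ≤ |σ*w₀.re| := le_abs_self _
    rw [abs_mul, hσabs, one_mul] at h1
    linarith
  have hden1 : 0 < σ*c - σ*w₁.re := by
    have h1 : σ*w₁.re ≤ |σ*w₁.re| := le_abs_self _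
    rw [abs_mul, hσabs, one_mul] at h1
    linarith
  set R₀ := p.im / (σ*c - σ*w₀.re) with hR₀def
  set R₁ := q.im / (σ*c - σ*w₁.re) with hR₁def
  have hR₀ : 0 < R₀ := div_pos hp hden0
  have hR₁ : 0 < R₁ := div_pos hq hden1
  have hpim : R₀ * (σ*c - σ*w₀.re) = p.im := div_mul_cancel₀ p.im (ne_of_gt hden0)
  have hqim : R₁ * (σ*c - σ*w₁.re) = q.im := div_mul_cancel₀ q.im (ne_of_gt hden1)
  clear_value R₀ R₁
  set z₀ : ℂ := p + ((σ*R₀ : ℝ) : ℂ) * Complex.I * w₀ with hz₀def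
  set z₁ : ℂ := q + ((σ*R₁ : ℝ) : ℂ) * Complex.I * w₁ with hz₁def
  have hz₀im : z₀.im = σ*c*R₀ := by
    rw [hz₀def]
    simp only [Complex.add_im, Complex.mul_im, Complex.mul_re, Complex.ofReal_re,
      Complex.ofReal_im, Complex.I_re, Complex.I_im]
    linear_combination -hpim
  have hz₁im : z₁.im = σ*c*R₁ := by
    rw [hz₁def]
    simp only [Complex.add_im, Complex.mul_im, Complex.mul_re, Complex.ofReal_re,
      Complex.ofReal_im, Complex.I_re, Complex.I_im]
    linear_combination -hqim
  clear_value z₀ z₁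
  set θ₀ := Complex.arg (-(((σ:ℝ)):ℂ) * Complex.I * w₀) with hθ₀def
  set θ₁ := Complex.arg (-(((σ:ℝ)):ℂ) * Complex.I * w₁) with hθ₁def
  have habsm0 : ‖-(((σ:ℝ)):ℂ) * Complex.I * w₀‖ = 1 := by
    simp [hσabs, hw₀]
  have habsm1 : ‖-(((σ:ℝ)):ℂ) * Complex.I * w₁‖ = 1 := by
    simp [hσabs, hw₁]
  have hexp0 : Complex.exp ((θ₀:ℂ) * Complex.I) = -((σ:ℝ):ℂ) * Complex.I * w₀ := by
    conv_rhs => rw [← Complex.norm_mul_exp_arg_mul_I (-(((σ:ℝ)):ℂ) * Complex.I * w₀)]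
    rw [habsm0, hθ₀def]
    simp
  have hexp1 : Complex.exp ((θ₁:ℂ) * Complex.I) = -((σ:ℝ):ℂ) * Complex.I * w₁ := by
    conv_rhs => rw [← Complex.norm_mul_exp_arg_mul_I (-(((σ:ℝ)):ℂ) * Complex.I * w₁)]
    rw [habsm1, hθ₁def]
    simp
  clear_value θ₀ θ₁
  set dz : ℂ := z₁ - z₀ with hdzdef
  have hdzim : dz.im = σ*c*R₁ - σ*c*R₀ := by
    rw [hdzdef, Complex.sub_im, hz₀im, hz₁im]
  clear_value dz
  set M : ℝ := ‖dz‖ + |R₁ - R₀| with hMdef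
  have hM0 : 0 ≤ M := by rw [hMdef]; positivity
  have hRmin : 0 < min R₀ R₁ := lt_min hR₀ hR₁
  set ε₀ : ℝ := min R₀ R₁ / (3*(M+1)) with hε₀def
  have hε₀pos : 0 < ε₀ := by
    rw [hε₀def]; exact div_pos hRmin (by linarith)
  set K : Set (ℝ × ℂ × ℝ) := Icc (0:ℝ) 1 ×ˢ (Metric.sphere (0:ℂ) 1 ×ˢ Icc (0:ℝ) ε₀)
    with hKdef
  have hKcomp : IsCompact K := by
    rw [hKdef]
    exact isCompact_Icc.prod ((isCompact_sphere 0 1).prod isCompact_Icc)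
  have hVK : ∀ x ∈ K, min R₀ R₁ / 2 ≤ ‖PhiV σ R₀ R₁ dz x‖ := by
    rw [hKdef]
    rintro ⟨t, w, e⟩ ⟨ht, hw, he⟩
    have hw' : ‖w‖ = 1 := by
      rw [mem_sphere_zero_iff_norm] at hw
      simpa using hw
    refine phiV_lower σ R₀ R₁ dz hσ hR₀ hR₁ ht hw' he.1 ?_
    rw [← hMdef, ← hε₀def]
    exact he.2
  have hVne : ∀ x ∈ K, PhiV σ R₀ R₁ dz x ≠ 0 := by
    intro x hx h0
    have h1 := hVK x hx
    rw [h0] at h1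
    simp only [norm_zero] at h1
    linarith
  have hUC := hKcomp.uniformContinuousOn_of_continuous (phi_contOn σ c R₀ R₁ dz K hVne)
  rw [Metric.uniformContinuousOn_iff] at hUC
  set δ : ℝ := min (c - κ₁) (κ₂ - c) with hδdef
  have hδpos : 0 < δ := lt_min (by linarith) (by linarith)
  obtain ⟨η, hηpos, hη⟩ := hUC δ hδpos
  -- choose the winding number
  obtain ⟨k, hk⟩ := exists_nat_ge ((max (1/ε₀) (2/η) + 2*Real.pi + |θ₁ - θ₀|)/(2*Real.pi))
  have hπ : 0 < Real.pi := Real.pi_pos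
  set N : ℝ := θ₁ - θ₀ + σ*(2*Real.pi*k) with hNdef
  have hθN : θ₀ + N = θ₁ + σ*(2*Real.pi*k) := by rw [hNdef]; ring
  have h2πk : max (1/ε₀) (2/η) + 2*Real.pi + |θ₁-θ₀| ≤ 2*Real.pi*k := by
    rw [div_le_iff₀ (by positivity)] at hk
    linarith
  have hσN : max (1/ε₀) (2/η) < σ*N := by
    have h1 : σ*N = σ*(θ₁-θ₀) + σ^2*(2*Real.pi*k) := by rw [hNdef]; ring
    have h2 : -|θ₁-θ₀| ≤ σ*(θ₁-θ₀) := by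
      have h3 := neg_abs_le (σ*(θ₁-θ₀))
      rw [abs_mul, hσabs, one_mul] at h3
      exact h3
    rw [h1, hσ2]
    linarith
  clear_value N
  have hσNpos : 0 < σ*N := by
    have h0 : 0 < 1/ε₀ := by positivity
    calc (0:ℝ) < 1/ε₀ := h0
      _ ≤ max (1/ε₀) (2/η) := le_max_left _ _
      _ < σ*N := hσN
  set ε : ℝ := 1/(σ*N) with hεdef
  have hεpos : 0 < ε := by rw [hεdef]; positivity
  have hεε₀ : ε ≤ ε₀ := by
    rw [hεdef]
    have h1 : 1/ε₀ < σ*N := lt_of_le_of_lt (le_max_left _ _) hσN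
    have h2 : 1/(σ*N) < 1/(1/ε₀) := one_div_lt_one_div_of_lt (by positivity) h1
    rw [one_div_one_div] at h2
    exact le_of_lt h2
  have hεη : ε < η := by
    rw [hεdef]
    have h1 : 2/η < σ*N := lt_of_le_of_lt (le_max_right _ _) hσN
    have h2 : 1/(σ*N) < 1/(2/η) := one_div_lt_one_div_of_lt (by positivity) h1
    rw [one_div_div] at h2
    linarith
  have hεN : ε * (σ*N) = 1 := by
    rw [hεdef]; exact one_div_mul_cancel hσNpos.ne'
  clear_value ε
  clear_value ε₀ M δ K
  -- the curve
  set Ex : ℝ → ℂ := fun t => Complex.exp (((θ₀ + N*t : ℝ) : ℂ) * Complex.I) with hExdef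
  set γ : ℝ → ℂ := fun t => z₀ + ((Sf t : ℝ):ℂ) * dz + ((Rf R₀ R₁ t : ℝ):ℂ) * Ex t with hγdef
  set g1 : ℝ → ℂ := fun t => ((Uf t : ℝ):ℂ) * (dz + ((R₁ - R₀:ℝ):ℂ) * Ex t)
      + (((N:ℝ):ℂ) * Complex.I) * (((Rf R₀ R₁ t:ℝ):ℂ) * Ex t) with hg1def
  set g2 : ℝ → ℂ := fun t => (((6 - 12*t):ℝ):ℂ) * (dz + ((R₁ - R₀:ℝ):ℂ) * Ex t)
      + 2*((N:ℝ):ℂ)*Complex.I*((Uf t * (R₁-R₀):ℝ):ℂ)*Ex t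
      - ((N^2 * Rf R₀ R₁ t:ℝ):ℂ)*Ex t with hg2def
  clear_value Ex γ g1 g2
  have hEx' : ∀ t : ℝ, HasDerivAt Ex (Ex t * (((N:ℝ):ℂ) * Complex.I)) t := by
    intro t
    simp only [hExdef]
    have h1 : HasDerivAt (fun t : ℝ => θ₀ + N*t) N t := by
      simpa using ((hasDerivAt_id t).const_mul N).const_add θ₀
    exact (h1.ofReal_comp.mul_const Complex.I).cexp
  have hSd : ∀ t : ℝ, HasDerivAt Sf (Uf t) t := by
    intro t
    unfold Sf Uf
    have h2 := ((hasDerivAt_pow 2 t).const_mul (3:ℝ)).sub ((hasDerivAt_pow 3 t).const_mul (2:ℝ))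
    refine h2.congr_deriv ?_
    symm
    push_cast
    ring
  have hS' : ∀ t : ℝ, HasDerivAt (fun t : ℝ => ((Sf t : ℝ):ℂ)) ((Uf t : ℝ):ℂ) t :=
    fun t => (hSd t).ofReal_comp
  have hRf' : ∀ t : ℝ, HasDerivAt (fun t : ℝ => ((Rf R₀ R₁ t : ℝ):ℂ))
      ((Uf t * (R₁-R₀) : ℝ):ℂ) t := by
    intro t
    have h1 : HasDerivAt (Rf R₀ R₁) (Uf t * (R₁-R₀)) t := by
      unfold Rf
      simpa using ((hSd t).mul_const (R₁ - R₀)).const_add R₀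
    exact h1.ofReal_comp
  have hγ' : ∀ t : ℝ, HasDerivAt γ (g1 t) t := by
    intro t
    simp only [hγdef, hg1def]
    have h1 := (((hS' t).mul_const dz).const_add z₀).add ((hRf' t).mul (hEx' t))
    refine h1.congr_deriv ?_
    symm
    push_cast
    ring
  have hg1' : ∀ t : ℝ, HasDerivAt g1 (g2 t) t := by
    intro t
    simp only [hg1def, hg2def]
    have hU' : HasDerivAt (fun t : ℝ => ((Uf t : ℝ):ℂ)) (((6-12*t : ℝ)):ℂ) t := by
      have h1 : HasDerivAt Uf (6-12*t) t := by
        unfold Uf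
        have h2 := ((hasDerivAt_id t).const_mul (6:ℝ)).sub ((hasDerivAt_pow 2 t).const_mul (6:ℝ))
        refine h2.congr_deriv ?_
        symm
        push_cast
        ring
      exact h1.ofReal_comp
    have hA : HasDerivAt (fun t : ℝ => dz + ((R₁-R₀:ℝ):ℂ) * Ex t)
        (((R₁-R₀:ℝ):ℂ) * (Ex t * (((N:ℝ):ℂ) * Complex.I))) t :=
      ((hEx' t).const_mul (((R₁-R₀:ℝ):ℂ))).const_add dz
    have h1 := (hU'.mul hA).add (((hRf' t).mul (hEx' t)).const_mul (((N:ℝ):ℂ) * Complex.I))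
    refine h1.congr_deriv ?_
    symm
    push_cast
    linear_combination (-(Ex t) * ((N:ℝ):ℂ)^2 * ((Rf R₀ R₁ t : ℝ):ℂ)) * Complex.I_sq
  have hd1 : deriv γ = g1 := funext fun t => (hγ' t).deriv
  have hd2 : ∀ t, deriv (deriv γ) t = g2 t := by
    intro t
    rw [hd1]
    exact (hg1' t).deriv
  -- cast identities
  have hc1 : ((σ:ℝ):ℂ) * ((N:ℝ):ℂ) * ((ε:ℝ):ℂ) = 1 := by
    have h := congrArg (fun x : ℝ => (x : ℂ)) hεN
    push_cast at h
    rw [← h]; ring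
  have hc2 : ((σ:ℝ):ℂ)^2 = 1 := by
    have h := congrArg (fun x : ℝ => (x : ℂ)) hσ2
    push_cast at h
    exact h
  have hc3 : ((N:ℝ):ℂ)^2 * ((ε:ℝ):ℂ)^2 = 1 := by
    have h : (((σ:ℝ):ℂ) * ((N:ℝ):ℂ) * ((ε:ℝ):ℂ))^2 = 1 := by rw [hc1]; norm_num
    have h2 : ((σ:ℝ):ℂ)^2 * (((N:ℝ):ℂ)^2 * ((ε:ℝ):ℂ)^2) = 1 := by rw [← h]; ring
    rw [hc2, one_mul] at h2
    exact h2
  have hc4 : ((σ:ℝ):ℂ) * ((N:ℝ):ℂ)^2 * ((ε:ℝ):ℂ) = ((N:ℝ):ℂ) := by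
    calc ((σ:ℝ):ℂ) * ((N:ℝ):ℂ)^2 * ((ε:ℝ):ℂ)
        = (((σ:ℝ):ℂ) * ((N:ℝ):ℂ) * ((ε:ℝ):ℂ)) * ((N:ℝ):ℂ) := by ring
      _ = ((N:ℝ):ℂ) := by rw [hc1]; ring
  -- link g1, g2 with PhiV, PhiW
  have hg1V : ∀ t : ℝ, g1 t = ((σ*N : ℝ):ℂ) * PhiV σ R₀ R₁ dz (t, Ex t, ε) := by
    intro t
    rw [hg1def]
    simp only [PhiV]
    push_cast
    linear_combination (-(((Uf t : ℝ):ℂ))*(dz + (((R₁:ℝ):ℂ) - ((R₀:ℝ):ℂ))*Ex t))*hc1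
      + (-(((N:ℝ):ℂ))*Complex.I*((Rf R₀ R₁ t : ℝ):ℂ)*Ex t)*hc2
  have hg2W : ∀ t : ℝ, g2 t = ((N^2 : ℝ):ℂ) * PhiW σ R₀ R₁ dz (t, Ex t, ε) := by
    intro t
    rw [hg2def]
    simp only [PhiW]
    push_cast
    linear_combination (-(((6:ℂ)-12*(t:ℂ)))*(dz + (((R₁:ℝ):ℂ) - ((R₀:ℝ):ℂ))*Ex t))*hc3
      + (-2*Complex.I*((Uf t : ℝ):ℂ)*((((R₁:ℝ):ℂ) - ((R₀:ℝ):ℂ)))*Ex t)*hc4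
  -- membership
  have habsEx : ∀ t : ℝ, ‖Ex t‖ = 1 := by
    intro t
    simp only [hExdef]
    exact Complex.norm_exp_ofReal_mul_I _
  have hmem : ∀ t ∈ Icc (0:ℝ) 1, (t, Ex t, ε) ∈ K := by
    intro t ht
    rw [hKdef]
    refine ⟨ht, ?_, ⟨le_of_lt hεpos, hεε₀⟩⟩
    rw [mem_sphere_zero_iff_norm]
    simpa using habsEx t
  have hmem0 : ∀ t ∈ Icc (0:ℝ) 1, (t, Ex t, (0:ℝ)) ∈ K := by
    intro t ht
    rw [hKdef]
    refine ⟨ht, ?_, ⟨le_refl 0, le_of_lt hε₀pos⟩⟩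
    rw [mem_sphere_zero_iff_norm]
    simpa using habsEx t
  -- the imaginary part of the curve
  have hγim : ∀ t : ℝ, (γ t).im = σ*c*Rf R₀ R₁ t + Rf R₀ R₁ t * (Ex t).im := by
    intro t
    simp only [hγdef, Complex.add_im, Complex.im_ofReal_mul]
    rw [hz₀im, hdzim]
    unfold Rf
    ring
  -- kappaH in terms of Phi
  have hkap : ∀ t ∈ Icc (0:ℝ) 1, kappaH γ t = Phi σ c R₀ R₁ dz (t, Ex t, ε) := by
    intro t ht
    have hVpos : 0 < ‖PhiV σ R₀ R₁ dz (t, Ex t, ε)‖ :=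
      lt_of_lt_of_le (by linarith [hRmin] : (0:ℝ) < min R₀ R₁ / 2) (hVK _ (hmem t ht))
    unfold kappaH kappaE
    rw [hd2 t, hd1, hg1V t, hg2W t, hγim t]
    set V := PhiV σ R₀ R₁ dz (t, Ex t, ε) with hVdef
    set W := PhiW σ R₀ R₁ dz (t, Ex t, ε) with hWdef
    have hN2 : (N:ℝ)^2 = (σ*N)^2 := by linear_combination (-(N^2))*hσ2
    have e1 : (starRingEnd ℂ) (((σ*N:ℝ):ℂ)*V) * (((N^2:ℝ):ℂ)*W)
        = ((σ*N:ℝ):ℂ) * ((σ*N:ℝ):ℂ) * ((σ*N:ℝ):ℂ) * ((starRingEnd ℂ) V * W) := by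
      rw [map_mul, Complex.conj_ofReal, hN2]
      push_cast
      ring
    have e2 : ‖((σ*N:ℝ):ℂ)*V‖ = (σ*N) * ‖V‖ := by
      rw [norm_mul, Complex.norm_real, Real.norm_eq_abs, abs_of_pos hσNpos]
    rw [e1, e2]
    rw [show ((σ*N:ℝ):ℂ) * ((σ*N:ℝ):ℂ) * ((σ*N:ℝ):ℂ) * ((starRingEnd ℂ) V * W)
        = (((σ*N)^3:ℝ):ℂ) * ((starRingEnd ℂ) V * W) by push_cast; ring]
    have hσ0 : σ ≠ 0 := left_ne_zero_of_mul hσNpos.ne'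
    have hN0 : N ≠ 0 := right_ne_zero_of_mul hσNpos.ne'
    simp only [Complex.im_ofReal_mul, Complex.re_ofReal_mul, Phi]
    rw [← hVdef, ← hWdef]
    field_simp
  -- closeness of curvature to c
  have hPhi0 : ∀ t ∈ Icc (0:ℝ) 1, Phi σ c R₀ R₁ dz (t, Ex t, 0) = c := by
    intro t ht
    exact phi_zero σ c R₀ R₁ dz t (Ex t) (habsEx t) hσ
      (lt_of_lt_of_le hRmin (Rf_mem ht).1)
  have hclose : ∀ t ∈ Icc (0:ℝ) 1, |kappaH γ t - c| < δ := by
    intro t ht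
    have hdist : dist ((t, Ex t, ε) : ℝ × ℂ × ℝ) ((t, Ex t, (0:ℝ)) : ℝ × ℂ × ℝ) < η := by
      simp only [Prod.dist_eq, dist_self, Real.dist_eq, sub_zero]
      rw [abs_of_pos hεpos]
      simp only [max_lt_iff]
      exact ⟨hηpos, hηpos, hεη⟩
    have h1 := hη (t, Ex t, ε) (hmem t ht) (t, Ex t, 0) (hmem0 t ht) hdist
    rw [Real.dist_eq, hPhi0 t ht] at h1
    rw [hkap t ht]
    exact h1
  -- conclusion
  refine ⟨γ, ?_, ?_, ?_, ?_, ?_, ?_⟩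
  · -- smoothness
    simp only [hγdef, hExdef]
    unfold Rf Sf
    have hco : ContDiff ℝ (⊤ : ℕ∞) (fun x : ℝ => (x : ℂ)) := Complex.ofRealCLM.contDiff
    have h1 : ContDiff ℝ (⊤ : ℕ∞) (fun t : ℝ => ((3*t^2 - 2*t^3 : ℝ) : ℂ)) :=
      hco.comp (by fun_prop)
    have h2 : ContDiff ℝ (⊤ : ℕ∞) (fun t : ℝ => ((R₀ + (3*t^2 - 2*t^3)*(R₁ - R₀) : ℝ) : ℂ)) :=
      hco.comp (by fun_prop)
    have h3 : ContDiff ℝ (⊤ : ℕ∞) (fun t : ℝ => Complex.exp (((θ₀ + N*t : ℝ) : ℂ) * Complex.I)) := by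
      apply Complex.contDiff_exp.comp
      exact (hco.comp (by fun_prop : ContDiff ℝ (⊤ : ℕ∞) (fun t : ℝ => θ₀ + N*t))).mul contDiff_const
    exact (contDiff_const.add (h1.mul contDiff_const)).add (h2.mul h3)
  · -- pointwise properties
    intro t ht
    have hVpos : 0 < ‖PhiV σ R₀ R₁ dz (t, Ex t, ε)‖ :=
      lt_of_lt_of_le (by linarith [hRmin] : (0:ℝ) < min R₀ R₁ / 2) (hVK _ (hmem t ht))
    refine ⟨?_, ?_, ?_, ?_⟩
    · rw [hd1, hg1V t]
      apply mul_ne_zero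
      · simp only [ne_eq, Complex.ofReal_eq_zero]
        exact ne_of_gt hσNpos
      · exact hVne _ (hmem t ht)
    · rw [hγim t]
      have h1 : |(Ex t).im| ≤ 1 := by
        calc |(Ex t).im| ≤ ‖Ex t‖ := Complex.abs_im_le_norm _
          _ = 1 := habsEx t
      have h2 := abs_le.mp h1
      have h3 := (Rf_mem (R₀ := R₀) (R₁ := R₁) ht).1
      have hRfpos : 0 < Rf R₀ R₁ t := by linarith
      have h4 : Rf R₀ R₁ t * (-1) ≤ Rf R₀ R₁ t * (Ex t).im :=
        mul_le_mul_of_nonneg_left h2.1 (le_of_lt hRfpos)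
      have h5 : 0 < (σ*c-1) * Rf R₀ R₁ t := mul_pos (by linarith) hRfpos
      linarith [h4, h5]
    · have h1 := abs_lt.mp (hclose t ht)
      have h2 : δ ≤ c - κ₁ := by rw [hδdef]; exact min_le_left _ _
      linarith
    · have h1 := abs_lt.mp (hclose t ht)
      have h2 : δ ≤ κ₂ - c := by rw [hδdef]; exact min_le_right _ _
      linarith
  · -- γ 0 = p
    simp only [hγdef]
    have hs0 : Sf 0 = 0 := by unfold Sf; norm_num
    have hr0 : Rf R₀ R₁ 0 = R₀ := by unfold Rf; rw [hs0]; ring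
    have hEx0 : Ex 0 = -((σ:ℝ):ℂ) * Complex.I * w₀ := by
      simp only [hExdef]
      norm_num
      rw [hexp0]
      ring
    simp only [hs0, hr0, hEx0]
    rw [hz₀def]
    push_cast
    ring
  · -- γ 1 = q
    simp only [hγdef]
    have hs1 : Sf 1 = 1 := by unfold Sf; norm_num
    have hr1 : Rf R₀ R₁ 1 = R₁ := by unfold Rf; rw [hs1]; ring
    have hEx1 : Ex 1 = -((σ:ℝ):ℂ) * Complex.I * w₁ := by
      simp only [hExdef]
      have harg : θ₀ + N*1 = θ₁ + σ*(2*Real.pi*k) := by rw [mul_one]; exact hθN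
      simp only [harg]
      rw [Complex.ofReal_add, add_mul, Complex.exp_add, hexp1]
      have hone : Complex.exp (((σ*(2*Real.pi*k) : ℝ):ℂ) * Complex.I) = 1 := by
        rcases hσ with h | h <;> rw [h]
        · have := Complex.exp_int_mul_two_pi_mul_I (k : ℤ)
          convert this using 2
          push_cast
          ring
        · have := Complex.exp_int_mul_two_pi_mul_I (-(k : ℤ))
          convert this using 2
          push_cast
          ring
      rw [hone, mul_one]
    simp only [hs1, hr1, hEx1]
    rw [hdzdef, hz₀def, hz₁def]
    push_cast
    ring
  · -- tangent at 0
    rw [hd1]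
    simp only [hg1def]
    have hu0 : Uf 0 = 0 := by unfold Uf; norm_num
    have hr0 : Rf R₀ R₁ 0 = R₀ := by unfold Rf Sf; norm_num
    have hEx0 : Ex 0 = -((σ:ℝ):ℂ) * Complex.I * w₀ := by
      simp only [hExdef]
      norm_num
      rw [hexp0]
      ring
    simp only [hu0, hr0, hEx0]
    have hval : ((0:ℝ):ℂ) * (dz + ((R₁ - R₀:ℝ):ℂ) * (-((σ:ℝ):ℂ) * Complex.I * w₀))
        + (((N:ℝ):ℂ) * Complex.I) * (((R₀:ℝ):ℂ) * (-((σ:ℝ):ℂ) * Complex.I * w₀))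
        = ((σ*N*R₀ : ℝ):ℂ) * w₀ := by
      have hII : Complex.I * Complex.I = -1 := Complex.I_mul_I
      push_cast
      linear_combination (-(((σ:ℝ):ℂ))*((N:ℝ):ℂ)*((R₀:ℝ):ℂ)*w₀)*hII
    rw [hval]
    have habs : ‖((σ*N*R₀ : ℝ):ℂ) * w₀‖ = σ*N*R₀ := by
      rw [norm_mul, Complex.norm_real, Real.norm_eq_abs, hw₀, mul_one, abs_of_pos (mul_pos hσNpos hR₀)]
    rw [habs]
    rw [mul_comm, mul_div_assoc, div_self, mul_one]
    simp only [ne_eq, Complex.ofReal_eq_zero]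
    exact ne_of_gt (mul_pos hσNpos hR₀)
  · -- tangent at 1
    rw [hd1]
    simp only [hg1def]
    have hu1 : Uf 1 = 0 := by unfold Uf; norm_num
    have hr1 : Rf R₀ R₁ 1 = R₁ := by unfold Rf Sf; norm_num
    have hEx1 : Ex 1 = -((σ:ℝ):ℂ) * Complex.I * w₁ := by
      simp only [hExdef]
      have harg : θ₀ + N*1 = θ₁ + σ*(2*Real.pi*k) := by rw [mul_one]; exact hθN
      simp only [harg]
      rw [Complex.ofReal_add, add_mul, Complex.exp_add, hexp1]
      have hone : Complex.exp (((σ*(2*Real.pi*k) : ℝ):ℂ) * Complex.I) = 1 := by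
        rcases hσ with h | h <;> rw [h]
        · have := Complex.exp_int_mul_two_pi_mul_I (k : ℤ)
          convert this using 2
          push_cast
          ring
        · have := Complex.exp_int_mul_two_pi_mul_I (-(k : ℤ))
          convert this using 2
          push_cast
          ring
      rw [hone, mul_one]
    simp only [hu1, hr1, hEx1]
    have hval : ((0:ℝ):ℂ) * (dz + ((R₁ - R₀:ℝ):ℂ) * (-((σ:ℝ):ℂ) * Complex.I * w₁))
        + (((N:ℝ):ℂ) * Complex.I) * (((R₁:ℝ):ℂ) * (-((σ:ℝ):ℂ) * Complex.I * w₁))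
        = ((σ*N*R₁ : ℝ):ℂ) * w₁ := by
      have hII : Complex.I * Complex.I = -1 := Complex.I_mul_I
      push_cast
      linear_combination (-(((σ:ℝ):ℂ))*((N:ℝ):ℂ)*((R₁:ℝ):ℂ)*w₁)*hII
    rw [hval]
    have habs : ‖((σ*N*R₁ : ℝ):ℂ) * w₁‖ = σ*N*R₁ := by
      rw [norm_mul, Complex.norm_real, Real.norm_eq_abs, hw₁, mul_one, abs_of_pos (mul_pos hσNpos hR₁)]
    rw [habs]
    rw [mul_comm, mul_div_assoc, div_self, mul_one]
    simp only [ne_eq, Complex.ofReal_eq_zero]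
    exact ne_of_gt (mul_pos hσNpos hR₁)


/-- Attainable endpoints: if `κ₂ > 1` or `κ₁ < -1`, any pair of unit tangent vectors in the
upper half-plane is connected by a smooth curve with curvature in `(κ₁, κ₂)`. -/
theorem attainable_endpoints (κ₁ κ₂ : ℝ) (h : κ₁ < κ₂) (hk : 1 < κ₂ ∨ κ₁ < -1)
    (p q : ℂ) (hp : 0 < p.im) (hq : 0 < q.im)
    (w₀ w₁ : ℂ) (hw₀ : ‖w₀‖ = 1) (hw₁ : ‖w₁‖ = 1) :
    ∃ γ : ℝ → ℂ, ContDiff ℝ (⊤ : ℕ∞) γ ∧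
      (∀ t ∈ Icc (0:ℝ) 1,
        deriv γ t ≠ 0 ∧ 0 < (γ t).im ∧ κ₁ < kappaH γ t ∧ kappaH γ t < κ₂) ∧
      γ 0 = p ∧ γ 1 = q ∧
      deriv γ 0 / (‖deriv γ 0‖ : ℂ) = w₀ ∧
      deriv γ 1 / (‖deriv γ 1‖ : ℂ) = w₁ := by
  obtain ⟨σ, c, hσ, hsc, h1, h2⟩ :
      ∃ σ c : ℝ, (σ = 1 ∨ σ = -1) ∧ 1 < σ*c ∧ κ₁ < c ∧ c < κ₂ := by
    rcases hk with hk | hk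
    · have hm : max 1 κ₁ < κ₂ := max_lt hk h
      refine ⟨1, (max 1 κ₁ + κ₂)/2, Or.inl rfl, ?_, ?_, ?_⟩
      · rw [one_mul]
        linarith [le_max_left (1:ℝ) κ₁]
      · linarith [le_max_right (1:ℝ) κ₁]
      · linarith
    · have hm : κ₁ < min (-1) κ₂ := lt_min hk h
      refine ⟨-1, (min (-1) κ₂ + κ₁)/2, Or.inr rfl, ?_, ?_, ?_⟩
      · linarith [min_le_left (-1:ℝ) κ₂]
      · linarith
      · linarith [min_le_right (-1:ℝ) κ₂]
  exact attainable_endpoints_aux κ₁ κ₂ σ c hσ hsc h1 h2 p q hp hq w₀ w₁ hw₀ hw₁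
end

section
/- (Graph lemma.) Let γ : [0,1] → ℂ be a C² regular curve with Im γ(t) > 0 for all t, whose hyperbolic geodesic curvature satisfies |κ(t)| ≤ 1 for all t, and suppose γ(0) = i and γ'(0) is a negative real number. Then the function t ↦ Arg γ(t) (principal argument, taking values in (0,π)) is strictly increasing on [0,1]; in particular the image of γ meets each ray {t·e^{iα} : t > 0}, α ∈ (0,π), at most once. -/
/-!
Write `γ = ‖γ‖ e^{iφ}` and `γ' = ‖γ'‖ e^{iθ}` with differentiable angles (integrate `γ'/γ` and
`γ''/γ'`), and let `g = ‖γ'‖ / Im γ` be the hyperbolic speed. Then `φ' = g sin φ sin (θ - φ)` and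
`θ' = g (κ - cos θ)`, with `φ = π/2`, `θ = π` at `t = 0`. Since `|κ| ≤ 1`, both `u = θ - 2φ` and
`u = π - θ` satisfy `u' ≤ g (1 - cos u) ≤ K u` for `u ≥ 0`, where `K` bounds `g`, so a
Gronwall argument keeps them nonpositive: `π ≤ θ ≤ 2φ`. As `Im γ > 0` keeps `φ < π`, we get
`0 < θ - φ < π`, hence `φ' > 0`, and `φ` is the principal argument of `γ`.
-/

open Set

section RealAngles

open Real

theorem image_nonpos_of_deriv_le_mul {u u' : ℝ → ℝ} {a b K : ℝ}
    (hu : ∀ t ∈ Icc a b, HasDerivAt u (u' t) t) (ha : u a ≤ 0)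
    (hK : ∀ t ∈ Ico a b, 0 < u t → u' t ≤ K * u t) :
    ∀ t ∈ Icc a b, u t ≤ 0 := by
  intro t ht
  have hfence : ∀ ε > 0, u t ≤ ε * exp ((|K| + 1) * (t - a)) := by
    intro ε hε
    refine image_le_of_deriv_right_lt_deriv_boundary
      (B := fun s => ε * exp ((|K| + 1) * (s - a)))
      (B' := fun s => ε * exp ((|K| + 1) * (s - a)) * (|K| + 1))
      (fun s hs => (hu s hs).continuousAt.continuousWithinAt)
      (fun s hs => (hu s (Ico_subset_Icc_self hs)).hasDerivWithinAt)
      (by simpa using ha.trans hε.le) (fun s => ?_) (fun s hs hus => ?_) ht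
    · simpa [mul_assoc] using ((((hasDerivAt_id s).sub_const a).const_mul (|K| + 1)).exp).const_mul ε
    · have hpos : 0 < u s := hus ▸ by positivity
      calc u' s ≤ K * u s := hK s hs hpos
        _ ≤ |K| * u s := by gcongr; exact le_abs_self K
        _ < (|K| + 1) * u s := by linarith
        _ = _ := by rw [hus]; ring
  by_contra! hpos
  have := hfence (u t / (2 * exp ((|K| + 1) * (t - a)))) (by positivity)
  rw [div_mul_eq_mul_div, mul_div_mul_right _ _ (exp_pos _).ne'] at this
  linarith

theorem mul_sub_cos_le_mul {g K c u : ℝ} (hg : 0 ≤ g) (hgK : g ≤ K) (hc : c ≤ 1) (hu : 0 ≤ u) :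
    g * (c - cos u) ≤ K * u := by
  have hcos : 1 - cos u ≤ u := by
    simpa [abs_of_nonneg hu] using (abs_le.mp (abs_cos_sub_cos_le 0 u)).2
  calc g * (c - cos u) ≤ g * (1 - cos u) := by gcongr
    _ ≤ K * (1 - cos u) := by gcongr; linarith [cos_le_one u]
    _ ≤ K * u := by gcongr; linarith

theorem cos_add_two_mul_sin_mul_sin_sub (θ φ : ℝ) :
    cos θ + 2 * sin φ * sin (θ - φ) = cos (θ - 2 * φ) := by
  rw [show θ - 2 * φ = θ - φ - φ by ring, cos_sub, sin_sub, cos_sub]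
  linear_combination (-cos θ) * sin_sq_add_cos_sq φ

theorem mapsTo_Ioo_of_sin_pos {φ : ℝ → ℝ} {a b : ℝ} (hφ : ContinuousOn φ (Icc a b))
    (ha : φ a ∈ Ioo 0 π) (hsin : ∀ t ∈ Icc a b, 0 < sin (φ t)) :
    MapsTo φ (Icc a b) (Ioo 0 π) := by
  intro t ht
  have hconn := isPreconnected_Icc.image φ hφ
  have hvalues : ∀ x, φ a ≤ x ∧ x ≤ φ t ∨ φ t ≤ x ∧ x ≤ φ a → sin x ≠ 0 := by
    rintro x (⟨h₁, h₂⟩ | ⟨h₁, h₂⟩)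
    · obtain ⟨s, hs, rfl⟩ := hconn.Icc_subset (mem_image_of_mem φ (left_mem_Icc.2 (ht.1.trans ht.2)))
        (mem_image_of_mem φ ht) ⟨h₁, h₂⟩
      exact (hsin s hs).ne'
    · obtain ⟨s, hs, rfl⟩ := hconn.Icc_subset (mem_image_of_mem φ ht)
        (mem_image_of_mem φ (left_mem_Icc.2 (ht.1.trans ht.2))) ⟨h₁, h₂⟩
      exact (hsin s hs).ne'
  constructor
  · by_contra! h
    exact hvalues 0 (Or.inr ⟨h, ha.1.le⟩) sin_zero
  · by_contra! h
    exact hvalues π (Or.inl ⟨ha.2.le, h⟩) sin_pi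

/-- `φ` and `θ` are to be read as the polar and tangent angles of a curve with hyperbolic speed
`g` and geodesic curvature `κ`. -/
theorem strictMonoOn_of_hasDerivAt_angles {φ θ g κ : ℝ → ℝ} {a b : ℝ}
    (hφ : ∀ t ∈ Icc a b, HasDerivAt φ (g t * sin (φ t) * sin (θ t - φ t)) t)
    (hθ : ∀ t ∈ Icc a b, HasDerivAt θ (g t * (κ t - cos (θ t))) t)
    (hg : ContinuousOn g (Icc a b)) (hg_pos : ∀ t ∈ Icc a b, 0 < g t)
    (hκ : ∀ t ∈ Icc a b, |κ t| ≤ 1) (hφa : φ a = π / 2) (hθa : θ a = π)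
    (hφπ : ∀ t ∈ Icc a b, φ t < π) : StrictMonoOn φ (Icc a b) := by
  obtain ⟨K, hK⟩ := isCompact_Icc.bddAbove_image hg
  have hgK : ∀ t ∈ Icc a b, g t ≤ K := fun t ht => hK (mem_image_of_mem g ht)
  have hθ_le : ∀ t ∈ Icc a b, θ t - 2 * φ t ≤ 0 := by
    refine image_nonpos_of_deriv_le_mul (K := K) (fun t ht => (hθ t ht).sub ((hφ t ht).const_mul 2))
      (by rw [hθa, hφa]; linarith) fun t ht hpos => ?_
    have ht := Ico_subset_Icc_self ht
    calc _ = g t * (κ t - cos (θ t - 2 * φ t)) := by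
          rw [← cos_add_two_mul_sin_mul_sin_sub]; ring
      _ ≤ K * (θ t - 2 * φ t) :=
          mul_sub_cos_le_mul (hg_pos t ht).le (hgK t ht) (abs_le.1 (hκ t ht)).2 hpos.le
  have hπ_le : ∀ t ∈ Icc a b, π - θ t ≤ 0 := by
    refine image_nonpos_of_deriv_le_mul (K := K) (fun t ht => (hθ t ht).const_sub π)
      (by rw [hθa, sub_self]) fun t ht hpos => ?_
    have ht := Ico_subset_Icc_self ht
    calc _ = g t * (-κ t - cos (π - θ t)) := by rw [cos_pi_sub]; ring
      _ ≤ K * (π - θ t) := mul_sub_cos_le_mul (hg_pos t ht).le (hgK t ht)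
          (by linarith [(abs_le.1 (hκ t ht)).1]) hpos.le
  refine strictMonoOn_of_hasDerivWithinAt_pos (convex_Icc a b)
    (fun t ht => (hφ t ht).continuousAt.continuousWithinAt)
    (fun t ht => (hφ t (interior_subset ht)).hasDerivWithinAt) fun t ht => ?_
  replace ht := interior_subset ht
  have h₁ := hθ_le t ht
  have h₂ := hπ_le t ht
  have h₃ := hφπ t ht
  have hsinφ : 0 < sin (φ t) := sin_pos_of_pos_of_lt_pi (by linarith [pi_pos]) h₃
  have hsinθφ : 0 < sin (θ t - φ t) := sin_pos_of_pos_of_lt_pi (by linarith) (by linarith)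
  exact mul_pos (mul_pos (hg_pos t ht) hsinφ) hsinθφ

end RealAngles

section Polar

open Complex

theorem mul_cexp_eq_norm_mul_cexp (w L : ℂ) :
    w * exp L = ‖w * exp L‖ * exp ((arg w + L.im) * I) := by
  rw [norm_mul, norm_exp]
  conv_lhs => rw [← norm_mul_exp_arg_mul_I w, ← re_add_im L]
  push_cast
  rw [add_mul, exp_add, exp_add]
  ring

theorem re_eq_norm_mul_cos {z : ℂ} {α : ℝ} (hz : z = ‖z‖ * exp (α * I)) :
    z.re = ‖z‖ * Real.cos α := by
  rw [congrArg re hz, re_ofReal_mul, exp_ofReal_mul_I_re]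

theorem im_eq_norm_mul_sin {z : ℂ} {α : ℝ} (hz : z = ‖z‖ * exp (α * I)) :
    z.im = ‖z‖ * Real.sin α := by
  rw [congrArg im hz, im_ofReal_mul, exp_ofReal_mul_I_im]

theorem im_div_eq_norm_div_norm_mul_sin {z w : ℂ} {α β : ℝ} (hz : z = ‖z‖ * exp (α * I))
    (hw : w = ‖w‖ * exp (β * I)) : (z / w).im = ‖z‖ / ‖w‖ * Real.sin (α - β) := by
  conv_lhs => rw [hz, hw]
  rw [mul_div_mul_comm, ← exp_sub, ← sub_mul, ← ofReal_sub, ← ofReal_div, im_ofReal_mul,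
    exp_ofReal_mul_I_im]

theorem im_div_eq_norm_div_im_mul_sin_mul_sin {z w : ℂ} {α β : ℝ}
    (hz : z = ‖z‖ * exp (α * I)) (hw : w = ‖w‖ * exp (β * I)) (hw_im : w.im ≠ 0) :
    (z / w).im = ‖z‖ / w.im * Real.sin β * Real.sin (α - β) := by
  rw [im_eq_norm_mul_sin hw] at hw_im ⊢
  rw [im_div_eq_norm_div_norm_mul_sin hz hw]
  field_simp [left_ne_zero_of_mul hw_im, right_ne_zero_of_mul hw_im]

theorem arg_eq_of_eq_norm_mul_cexp {z : ℂ} {α : ℝ} (hz : z = ‖z‖ * exp (α * I)) (hz₀ : z ≠ 0)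
    (hα : α ∈ Ioc (-Real.pi) Real.pi) : arg z = α := by
  rw [hz, arg_real_mul _ (norm_pos_iff.2 hz₀), arg_exp_mul_I, toIocMod_eq_self]
  simpa [two_mul, ← add_assoc] using hα

theorem exists_eq_mul_cexp_of_hasDerivAt {f f' : ℝ → ℂ} {a b : ℝ}
    (hf : ∀ t, HasDerivAt f (f' t) t) (hf' : Continuous f') (hne : ∀ t ∈ Icc a b, f t ≠ 0) :
    ∃ L : ℝ → ℂ, L a = 0 ∧ (∀ t ∈ Icc a b, HasDerivAt L (f' t / f t) t) ∧
      ∀ t ∈ Icc a b, f t = f a * exp (L t) := by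
  have hfc : Continuous f := continuous_iff_continuousAt.2 fun t => (hf t).continuousAt
  have hquot : ∀ t ∈ Icc a b, ContinuousAt (fun s => f' s / f s) t :=
    fun t ht => hf'.continuousAt.div hfc.continuousAt (hne t ht)
  set L : ℝ → ℂ := fun t => ∫ s in a..t, f' s / f s
  have hL : ∀ t ∈ Icc a b, HasDerivAt L (f' t / f t) t := by
    intro t ht
    refine intervalIntegral.integral_hasDerivAt_right (ContinuousOn.intervalIntegrable fun s hs => ?_)
      (hf'.measurable.div hfc.measurable).stronglyMeasurable.stronglyMeasurableAtFilter (hquot t ht)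
    rw [uIcc_of_le ht.1] at hs
    exact (hquot s ⟨hs.1, hs.2.trans ht.2⟩).continuousWithinAt
  have hconst : ∀ t ∈ Icc a b, HasDerivAt (fun s => f s * exp (-L s)) 0 t := by
    intro t ht
    refine ((hf t).mul (hL t ht).neg.cexp).congr_deriv ?_
    field_simp [hne t ht]
    ring
  refine ⟨L, intervalIntegral.integral_same, hL, fun t ht => ?_⟩
  have h := constant_of_has_deriv_right_zero
    (fun s hs => (hconst s hs).continuousAt.continuousWithinAt)
    (fun s hs => (hconst s (Ico_subset_Icc_self hs)).hasDerivWithinAt) t ht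
  simp only [intervalIntegral.integral_same, L, neg_zero, exp_zero, mul_one] at h
  rw [← h, mul_assoc, ← exp_add, neg_add_cancel, exp_zero, mul_one]

theorem exists_hasDerivAt_eq_norm_mul_cexp {f f' : ℝ → ℂ} {a b : ℝ}
    (hf : ∀ t, HasDerivAt f (f' t) t) (hf' : Continuous f') (hne : ∀ t ∈ Icc a b, f t ≠ 0) :
    ∃ α : ℝ → ℝ, α a = arg (f a) ∧ (∀ t ∈ Icc a b, HasDerivAt α (f' t / f t).im t) ∧
      ∀ t ∈ Icc a b, f t = ‖f t‖ * exp (α t * I) := by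
  obtain ⟨L, hL₀, hL, hfL⟩ := exists_eq_mul_cexp_of_hasDerivAt hf hf' hne
  refine ⟨fun t => arg (f a) + (L t).im, by simp [hL₀], fun t ht => ?_, fun t ht => ?_⟩
  · exact (imCLM.hasFDerivAt.comp_hasDerivAt t (hL t ht)).const_add _
  · rw [hfL t ht]
    push_cast
    exact mul_cexp_eq_norm_mul_cexp (f a) (L t)

theorem im_deriv_deriv_div_deriv {γ : ℝ → ℂ} {t : ℝ} (h : deriv γ t ≠ 0) :
    (deriv (deriv γ) t / deriv γ t).im = kappaE γ t * ‖deriv γ t‖ := by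
  rw [div_im, kappaE, normSq_eq_norm_sq]
  simp only [mul_im, conj_re, conj_im]
  field_simp [norm_ne_zero_iff.2 h]
  ring

theorem im_deriv_deriv_div_deriv_eq_kappaH {γ : ℝ → ℂ} {t θ : ℝ}
    (hθ : deriv γ t = ‖deriv γ t‖ * exp (θ * I)) (h : deriv γ t ≠ 0) (him : (γ t).im ≠ 0) :
    (deriv (deriv γ) t / deriv γ t).im = ‖deriv γ t‖ / (γ t).im * (kappaH γ t - Real.cos θ) := by
  rw [im_deriv_deriv_div_deriv h, kappaH, re_eq_norm_mul_cos hθ]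
  field_simp [norm_ne_zero_iff.2 h]
  ring

end Polar

open Real in
/-- Graph lemma: a curve with `|κ| ≤ 1` starting at `i` in the direction of a negative
real number has strictly increasing principal argument. -/
theorem arg_strictMono_of_small_curvature (γ : ℝ → ℂ) (hγ : ContDiff ℝ 2 γ)
    (hreg : ∀ t ∈ Icc (0:ℝ) 1, deriv γ t ≠ 0)
    (him : ∀ t ∈ Icc (0:ℝ) 1, 0 < (γ t).im)
    (hκ : ∀ t ∈ Icc (0:ℝ) 1, |kappaH γ t| ≤ 1)
    (h0 : γ 0 = Complex.I)
    (hd0im : (deriv γ 0).im = 0) (hd0re : (deriv γ 0).re < 0) :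
    StrictMonoOn (fun t => (γ t).arg) (Icc (0:ℝ) 1) := by
  have hγ₁ : ContDiff ℝ 1 (deriv γ) := hγ.deriv'
  have hγ₀ : ∀ t ∈ Icc (0:ℝ) 1, γ t ≠ 0 := fun t ht h => by simpa [h] using him t ht
  obtain ⟨φ, hφ₀, hφ, hγφ⟩ := exists_hasDerivAt_eq_norm_mul_cexp
    (fun t => (hγ.differentiable two_ne_zero t).hasDerivAt) (hγ.continuous_deriv one_le_two) hγ₀
  obtain ⟨θ, hθ₀, hθ, hγθ⟩ := exists_hasDerivAt_eq_norm_mul_cexp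
    (fun t => (hγ₁.differentiable one_ne_zero t).hasDerivAt) (hγ₁.continuous_deriv le_rfl) hreg
  rw [h0, Complex.arg_I] at hφ₀
  rw [← Complex.re_add_im (deriv γ 0), hd0im] at hθ₀
  simp only [Complex.ofReal_zero, zero_mul, add_zero, Complex.arg_ofReal_of_neg hd0re] at hθ₀
  have hsin : ∀ t ∈ Icc (0:ℝ) 1, 0 < sin (φ t) := fun t ht =>
    pos_of_mul_pos_right (im_eq_norm_mul_sin (hγφ t ht) ▸ him t ht) (norm_nonneg _)
  have hφ_mem := mapsTo_Ioo_of_sin_pos (fun t ht => (hφ t ht).continuousAt.continuousWithinAt)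
    (by rw [hφ₀]; constructor <;> linarith [pi_pos]) hsin
  have hmono := strictMonoOn_of_hasDerivAt_angles (g := fun t => ‖deriv γ t‖ / (γ t).im)
    (fun t ht => by
      simpa only [im_div_eq_norm_div_im_mul_sin_mul_sin (hγθ t ht) (hγφ t ht) (him t ht).ne']
        using hφ t ht)
    (fun t ht => by
      simpa only [im_deriv_deriv_div_deriv_eq_kappaH (hγθ t ht) (hreg t ht) (him t ht).ne']
        using hθ t ht)
    (hγ₁.continuous.norm.continuousOn.div (Complex.continuous_im.comp hγ.continuous).continuousOn
      fun t ht => (him t ht).ne')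
    (fun t ht => div_pos (norm_pos_iff.2 (hreg t ht)) (him t ht)) hκ hφ₀ hθ₀
    (fun t ht => (hφ_mem ht).2)
  exact hmono.congr fun t ht => (arg_eq_of_eq_norm_mul_cexp (hγφ t ht) (hγ₀ t ht)
    ⟨by linarith [(hφ_mem ht).1, pi_pos], (hφ_mem ht).2.le⟩).symm
end

section
/- (Total turnings are bounded below when the curvature is bounded below by −1.) For any p, q ∈ ℂ with Im p > 0 and Im q > 0, and any w₀, w₁ ∈ ℂ with |w₀| = |w₁| = 1, there exists τ₀ ∈ ℝ such that every C² regular curve γ : [0,1] → ℂ with Im γ(t) > 0 for all t, γ(0) = p, γ(1) = q, γ'(0)/|γ'(0)| = w₀, γ'(1)/|γ'(1)| = w₁, and hyperbolic geodesic curvature κ(t) > −1 for all t, has total turning at least τ₀. -/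
open Set

/-!
If `θ 1 < θ 0 - 2π`, the argument `θ` must pass downwards through some level
`c ≡ π (mod 2π)`; let `T` be the last time with `θ T = c`. There the unit tangent is `-1`, so
`κ = -(Im γ) (Im γ'') / |γ'|² - 1`, and `κ > -1` forces `Im γ'' < 0`. Hence `Im γ' < 0`,
i.e. `sin θ < 0`, just after `T`, whereas `θ ∈ (c - π, c)` there forces `sin θ > 0`;
so `τ₀ = -2π` works.
-/

open Filter Topology Complex
open scoped Real

theorem ContinuousOn.exists_last_eq_of_le_of_lt {θ : ℝ → ℝ} {a b c : ℝ} (hab : a ≤ b)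
    (hθ : ContinuousOn θ (Icc a b)) (ha : c ≤ θ a) (hb : θ b < c) :
    ∃ T ∈ Ico a b, θ T = c ∧ ∀ t ∈ Ioc T b, θ t < c := by
  set S := Icc a b ∩ θ ⁻¹' Ici c
  have hS : IsClosed S := hθ.preimage_isClosed_of_isClosed isClosed_Icc isClosed_Ici
  have hbdd : BddAbove S := ⟨b, fun t ht => ht.1.2⟩
  have hTS : sSup S ∈ S := hS.csSup_mem ⟨a, ⟨left_mem_Icc.2 hab, ha⟩⟩ hbdd
  set T := sSup S
  have hafter (t) (ht : t ∈ Ioc T b) : θ t < c :=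
    not_le.1 fun hct => (le_csSup hbdd ⟨⟨hTS.1.1.trans ht.1.le, ht.2⟩, hct⟩).not_gt ht.1
  have hTb : T < b := hTS.1.2.lt_of_ne fun h => (h ▸ hTS.2 : c ≤ θ b).not_gt hb
  -- By the intermediate value theorem `θ` takes the value `c` on `[T, b]`, necessarily at `T`.
  obtain ⟨s, hs, hθs⟩ :=
    intermediate_value_Icc' hTb.le (hθ.mono (Icc_subset_Icc hTS.1.1 le_rfl)) ⟨hb.le, hTS.2⟩
  have hsT : s = T := le_antisymm (le_csSup hbdd ⟨⟨hTS.1.1.trans hs.1, hs.2⟩, hθs.ge⟩) hs.1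
  exact ⟨T, ⟨hTS.1.1, hTb⟩, hsT ▸ hθs, hafter⟩

theorem exists_mem_Ioc_exp_mul_I_eq_neg_one (x : ℝ) :
    ∃ c ∈ Ioc (x - 2 * π) x,
      exp (c * I) = -1 ∧ ∀ s ∈ Ioo (c - π) c, 0 < Real.sin s := by
  have h2π : (0 : ℝ) < 2 * π := by positivity
  obtain ⟨hlo, hhi⟩ := sub_toIocDiv_zsmul_mem_Ioc h2π (x - 2 * π) π
  set n := toIocDiv h2π (x - 2 * π) π
  refine ⟨π - n * (2 * π), ⟨by simpa using hlo, by simpa using hhi⟩, ?_, fun s hs => ?_⟩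
  · rw [exp_mul_I]
    push_cast
    rw [Complex.cos_sub_int_mul_two_pi, Complex.sin_sub_int_mul_two_pi, Complex.cos_pi,
      Complex.sin_pi]
    ring
  · rw [← Real.sin_add_int_mul_two_pi s n]
    exact Real.sin_pos_of_pos_of_lt_pi (by linarith [hs.1]) (by linarith [hs.2])

theorem HasDerivAt.eventually_nhdsGT_neg {f : ℝ → ℝ} {f' x : ℝ} (hf : HasDerivAt f f' x)
    (hx : f x = 0) (hf' : f' < 0) : ∀ᶠ t in 𝓝[>] x, f t < 0 := by
  filter_upwards [nhdsWithin_le_nhds (eventually_nhdsWithin_sign_eq_of_deriv_neg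
    (hf.deriv ▸ hf') hx), self_mem_nhdsWithin] with t hsign (ht : x < t)
  rwa [sign_neg (sub_neg.2 ht), sign_eq_neg_one_iff] at hsign

theorem im_deriv_deriv_neg_of_deriv_eq_neg {γ : ℝ → ℂ} {t r : ℝ} (hr : 0 < r)
    (hγ' : deriv γ t = -r) (hy : 0 < (γ t).im) (hκ : -1 < kappaH γ t) :
    (deriv (deriv γ) t).im < 0 := by
  have hκ_eq : kappaH γ t = -1 - (γ t).im / r ^ 2 * (deriv (deriv γ) t).im := by
    simp only [kappaH, kappaE, hγ', norm_neg, Complex.norm_real, Real.norm_of_nonneg hr.le,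
      map_neg, Complex.conj_ofReal, neg_mul, Complex.neg_im, Complex.im_ofReal_mul,
      Complex.neg_re, Complex.ofReal_re]
    field_simp
    ring
  exact neg_of_mul_neg_right (a := (γ t).im / r ^ 2) (by linarith) (by positivity)

theorem eventually_im_deriv_neg_of_deriv_eq_neg {γ : ℝ → ℂ} {t r : ℝ}
    (hγ : ContDiff ℝ 2 γ) (hr : 0 < r) (hγ' : deriv γ t = -r) (hy : 0 < (γ t).im)
    (hκ : -1 < kappaH γ t) :
    ∀ᶠ s in 𝓝[>] t, (deriv γ s).im < 0 := by
  have h := imCLM.hasFDerivAt.comp_hasDerivAt t (hγ.differentiable_deriv_two t).hasDerivAt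
  exact h.eventually_nhdsGT_neg (by rw [Function.comp_apply, imCLM_apply, hγ']; simp)
    (im_deriv_deriv_neg_of_deriv_eq_neg hr hγ' hy hκ)

namespace IsArgument

variable {γ : ℝ → ℂ} {θ : ℝ → ℝ} {t : ℝ}

theorem sin_eq (hθ : IsArgument γ θ) (ht : t ∈ Icc 0 1) :
    Real.sin (θ t) = (deriv γ t).im / ‖deriv γ t‖ := by
  simpa [Complex.div_ofReal_im, Complex.exp_ofReal_mul_I_im] using
    (congrArg Complex.im (hθ.2 t ht)).symm

theorem deriv_eq_neg_norm (hθ : IsArgument γ θ) (ht : t ∈ Icc 0 1) (hne : deriv γ t ≠ 0)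
    (hexp : exp (θ t * I) = -1) : deriv γ t = -(‖deriv γ t‖ : ℂ) := by
  have h := hθ.2 t ht
  rwa [hexp, div_eq_iff (by exact_mod_cast (norm_pos_iff.2 hne).ne'), neg_one_mul] at h

end IsArgument

theorem total_turning_bounded_below_general (p q : ℂ) (w₀ w₁ : ℂ) :
    ∃ τ₀ : ℝ, ∀ γ : ℝ → ℂ, ContDiff ℝ 2 γ →
      (∀ t ∈ Icc (0:ℝ) 1, deriv γ t ≠ 0 ∧ 0 < (γ t).im ∧ -1 < kappaH γ t) →
      γ 0 = p → γ 1 = q →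
      deriv γ 0 / (‖deriv γ 0‖ : ℂ) = w₀ →
      deriv γ 1 / (‖deriv γ 1‖ : ℂ) = w₁ →
      ∀ θ : ℝ → ℝ, IsArgument γ θ → τ₀ ≤ θ 1 - θ 0 := by
  refine ⟨-(2 * π), fun γ hγ hreg _ _ _ _ θ hθ => ?_⟩
  by_contra! hturn
  obtain ⟨c, ⟨hc_gt, hc_le⟩, hexp, hsin⟩ := exists_mem_Ioc_exp_mul_I_eq_neg_one (θ 0)
  obtain ⟨T, ⟨hT0, hT1⟩, hθT, hafter⟩ :=
    hθ.1.exists_last_eq_of_le_of_lt zero_le_one hc_le (by linarith)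
  have hT : T ∈ Icc (0 : ℝ) 1 := ⟨hT0, hT1.le⟩
  obtain ⟨hne, hy, hκ⟩ := hreg T hT
  have him_neg : ∀ᶠ t in 𝓝[>] T, (deriv γ t).im < 0 :=
    eventually_im_deriv_neg_of_deriv_eq_neg hγ (norm_pos_iff.2 hne)
      (hθ.deriv_eq_neg_norm hT hne (hθT ▸ hexp)) hy hκ
  have hθ_near : ∀ᶠ t in 𝓝[>] T, θ t ∈ Ioo (c - π) (c + π) := by
    have hcont : Tendsto θ (𝓝[>] T) (𝓝 c) := hθT ▸ ((hθ.1 T hT).mono_of_mem_nhdsWithin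
      (mem_of_superset (Ioo_mem_nhdsGT hT1) fun t ht => ⟨hT0.trans ht.1.le, ht.2.le⟩))
    exact hcont (Ioo_mem_nhds (by linarith [Real.pi_pos]) (by linarith [Real.pi_pos]))
  obtain ⟨t, him_t, hθ_t, ht⟩ := (him_neg.and (hθ_near.and (Ioo_mem_nhdsGT hT1))).exists
  linarith [hsin (θ t) ⟨hθ_t.1, hafter t ⟨ht.1, ht.2.le⟩⟩,
    hθ.sin_eq ⟨hT0.trans ht.1.le, ht.2.le⟩,
    div_nonpos_of_nonpos_of_nonneg him_t.le (norm_nonneg (deriv γ t))]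

/-- Total turnings are bounded below when the curvature is bounded below by `-1`. -/
theorem total_turning_bounded_below (p q : ℂ) (hp : 0 < p.im) (hq : 0 < q.im)
    (w₀ w₁ : ℂ) (hw₀ : ‖w₀‖ = 1) (hw₁ : ‖w₁‖ = 1) :
    ∃ τ₀ : ℝ, ∀ γ : ℝ → ℂ, ContDiff ℝ 2 γ →
      (∀ t ∈ Icc (0:ℝ) 1, deriv γ t ≠ 0 ∧ 0 < (γ t).im ∧ -1 < kappaH γ t) →
      γ 0 = p → γ 1 = q →
      deriv γ 0 / (‖deriv γ 0‖ : ℂ) = w₀ →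
      deriv γ 1 / (‖deriv γ 1‖ : ℂ) = w₁ →
      ∀ θ : ℝ → ℝ, IsArgument γ θ → τ₀ ≤ θ 1 - θ 0 :=
  total_turning_bounded_below_general p q w₀ w₁
end

section
/- (Convexity of angle-parametrized curves with curvature in an interval disjoint from [−1,1].) Let 1 ≤ κ₁ < κ₂ be real numbers and τ > 0. For i = 0, 1 let γ_i : [0,τ] → ℂ be a C² curve with Im γ_i(θ) > 0 for all θ, such that γ_i'(θ) = r_i(θ)·e^{iθ} with r_i(θ) > 0 for all θ, and whose hyperbolic geodesic curvature lies in (κ₁, κ₂) at every θ. Then for every s ∈ [0,1] the curve γ_s(θ) = (1−s)·γ₀(θ) + s·γ₁(θ) satisfies: Im γ_s(θ) > 0, γ_s'(θ) is a positive real multiple of e^{iθ} (so γ_s is regular with the same unit tangent direction e^{iθ}), and the hyperbolic geodesic curvature of γ_s lies in (κ₁, κ₂) at every θ ∈ [0,τ]. -/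
/-!
If `γ'(θ) = r(θ) e^{iθ}` with `r > 0` on an interval, then `e^{-iθ} γ'(θ) = r(θ)` is real there, so
its derivative `e^{-iθ} γ'' - i r` is real too, i.e. `Im (e^{-iθ} γ'') = r`. The hyperbolic
curvature then simplifies to `κ = Im γ / r + cos θ`, and `κ₁ < κ < κ₂` becomes the pair of strict
inequalities `(κ₁ - cos θ) r < Im γ < (κ₂ - cos θ) r`, linear in `(Im γ, r)`. For curves sharing
the tangent direction `e^{iθ}`, both `Im γ` and `r` depend linearly on the curve, so the
inequalities survive convex combination.
-/

open Set

open Complex ComplexConjugate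

theorem HasDerivWithinAt.im_eq_zero_of_forall_im_eq_zero {g : ℝ → ℂ} {g' : ℂ} {s : Set ℝ}
    {x : ℝ} (hg : HasDerivWithinAt g g' s x) (hs : UniqueDiffWithinAt ℝ s x) (hx : x ∈ s)
    (h : ∀ y ∈ s, (g y).im = 0) : g'.im = 0 := by
  have him : HasDerivWithinAt (fun y => (g y).im) g'.im s x :=
    imCLM.hasFDerivAt.comp_hasDerivWithinAt x hg
  have hzero : HasDerivWithinAt (fun y => (g y).im) 0 s x :=
    (hasDerivWithinAt_const x s 0).congr h (h x hx)
  exact hs.eq_deriv s him hzero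

theorem im_conj_mul_deriv_of_eq_mul_exp {f : ℝ → ℂ} {r : ℝ → ℝ} {s : Set ℝ} {θ : ℝ}
    (hθ : θ ∈ s) (hs : UniqueDiffWithinAt ℝ s θ) (hf : DifferentiableAt ℝ f θ)
    (hfr : ∀ x ∈ s, f x = r x * exp (x * I)) :
    (conj (f θ) * deriv f θ).im = r θ ^ 2 := by
  have hrot : ∀ x ∈ s, exp (-(x * I)) * f x = r x := by
    intro x hx
    rw [hfr x hx, mul_left_comm, ← exp_add, neg_add_cancel, exp_zero, mul_one]
  have hexp : HasDerivAt (fun x : ℝ => exp (-(x * I))) (exp (-(θ * I)) * -I) θ :=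
    ((ofRealCLM.hasDerivAt.mul_const I).neg.cexp).congr_deriv (by simp)
  have hderiv := (hexp.mul hf.hasDerivAt).hasDerivWithinAt (s := s)
  have him := hderiv.im_eq_zero_of_forall_im_eq_zero hs hθ
    (fun x hx => by simp only [Pi.mul_apply, hrot x hx, ofReal_im])
  have hconj : conj (f θ) = r θ * exp (-(θ * I)) := by
    rw [hfr θ hθ, map_mul, conj_ofReal, ← exp_conj, map_mul, conj_ofReal, conj_I, mul_neg]
  rw [mul_right_comm, hrot θ hθ] at him
  simp only [add_im, im_ofReal_mul, mul_neg, neg_im, I_im, mul_one] at him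
  rw [hconj, mul_assoc, im_ofReal_mul, neg_add_eq_zero.1 him, sq]

theorem kappaH_eq_of_deriv_eq_mul_exp {γ : ℝ → ℂ} {r : ℝ → ℝ} {s : Set ℝ} {θ : ℝ}
    (hθ : θ ∈ s) (hs : UniqueDiffWithinAt ℝ s θ) (hγ : DifferentiableAt ℝ (deriv γ) θ)
    (hr : 0 < r θ) (hγr : ∀ x ∈ s, deriv γ x = r x * exp (x * I)) :
    kappaH γ θ = (γ θ).im / r θ + Real.cos θ := by
  have hnorm : ‖deriv γ θ‖ = r θ := by
    rw [hγr θ hθ, norm_mul, norm_exp_ofReal_mul_I, mul_one, norm_real, Real.norm_of_nonneg hr.le]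
  have hre : (deriv γ θ).re = r θ * Real.cos θ := by
    rw [hγr θ hθ, re_ofReal_mul, exp_ofReal_mul_I_re]
  unfold kappaH kappaE
  rw [im_conj_mul_deriv_of_eq_mul_exp hθ hs hγ hγr, hnorm, hre]
  field_simp

theorem deriv_const_mul_add_const_mul {𝕜 𝔸 : Type*} [NontriviallyNormedField 𝕜] [NormedRing 𝔸]
    [NormedAlgebra 𝕜 𝔸] {f g : 𝕜 → 𝔸} {x : 𝕜} (a b : 𝔸) (hf : DifferentiableAt 𝕜 f x)
    (hg : DifferentiableAt 𝕜 g x) :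
    deriv (fun x => a * f x + b * g x) x = a * deriv f x + b * deriv g x :=
  ((hf.hasDerivAt.const_mul a).add (hg.hasDerivAt.const_mul b)).deriv

theorem one_sub_mul_add_mul_pos {s a b : ℝ} (hs : s ∈ Icc (0 : ℝ) 1) (ha : 0 < a) (hb : 0 < b) :
    0 < (1 - s) * a + s * b := by
  simpa using convex_Ioi (0 : ℝ) ha hb (sub_nonneg.2 hs.2) hs.1 (sub_add_cancel 1 s)

theorem div_add_mem_Ioo_iff {y r c A B : ℝ} (hr : 0 < r) :
    y / r + c ∈ Ioo A B ↔ (A - c) * r < y ∧ y < (B - c) * r := by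
  rw [mem_Ioo, ← sub_lt_iff_lt_add, ← lt_sub_iff_add_lt, lt_div_iff₀ hr, div_lt_iff₀ hr]

theorem convex_combination_div_add_mem_Ioo {s y₀ y₁ r₀ r₁ c A B : ℝ} (hs : s ∈ Icc (0 : ℝ) 1)
    (hr₀ : 0 < r₀) (hr₁ : 0 < r₁) (h₀ : y₀ / r₀ + c ∈ Ioo A B) (h₁ : y₁ / r₁ + c ∈ Ioo A B) :
    ((1 - s) * y₀ + s * y₁) / ((1 - s) * r₀ + s * r₁) + c ∈ Ioo A B := by
  rw [div_add_mem_Ioo_iff hr₀] at h₀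
  rw [div_add_mem_Ioo_iff hr₁] at h₁
  rw [div_add_mem_Ioo_iff (one_sub_mul_add_mul_pos hs hr₀ hr₁)]
  constructor
  · linear_combination one_sub_mul_add_mul_pos hs (sub_pos.2 h₀.1) (sub_pos.2 h₁.1)
  · linear_combination one_sub_mul_add_mul_pos hs (sub_pos.2 h₀.2) (sub_pos.2 h₁.2)

theorem convex_combination_disjoint_general (κ₁ κ₂ : ℝ)
    (τ : ℝ) (hτ : 0 < τ) (γ₀ γ₁ : ℝ → ℂ) (r₀ r₁ : ℝ → ℝ)
    (hγ₀ : ContDiff ℝ 2 γ₀) (hγ₁ : ContDiff ℝ 2 γ₁)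
    (him₀ : ∀ θ ∈ Icc (0:ℝ) τ, 0 < (γ₀ θ).im)
    (him₁ : ∀ θ ∈ Icc (0:ℝ) τ, 0 < (γ₁ θ).im)
    (hr₀ : ∀ θ ∈ Icc (0:ℝ) τ,
      0 < r₀ θ ∧ deriv γ₀ θ = (r₀ θ : ℂ) * Complex.exp (θ * Complex.I))
    (hr₁ : ∀ θ ∈ Icc (0:ℝ) τ,
      0 < r₁ θ ∧ deriv γ₁ θ = (r₁ θ : ℂ) * Complex.exp (θ * Complex.I))
    (hκ₀ : ∀ θ ∈ Icc (0:ℝ) τ, κ₁ < kappaH γ₀ θ ∧ kappaH γ₀ θ < κ₂)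
    (hκ₁ : ∀ θ ∈ Icc (0:ℝ) τ, κ₁ < kappaH γ₁ θ ∧ kappaH γ₁ θ < κ₂) :
    ∀ s ∈ Icc (0:ℝ) 1, ∀ θ ∈ Icc (0:ℝ) τ,
      0 < (((1 - (s:ℂ)) * γ₀ θ + (s:ℂ) * γ₁ θ)).im ∧
      (∃ r : ℝ, 0 < r ∧
        deriv (fun x => (1 - (s:ℂ)) * γ₀ x + (s:ℂ) * γ₁ x) θ
          = (r : ℂ) * Complex.exp (θ * Complex.I)) ∧
      κ₁ < kappaH (fun x => (1 - (s:ℂ)) * γ₀ x + (s:ℂ) * γ₁ x) θ ∧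
      kappaH (fun x => (1 - (s:ℂ)) * γ₀ x + (s:ℂ) * γ₁ x) θ < κ₂ := by
  intro s hs θ hθ
  have hkappa : ∀ (γ : ℝ → ℂ) (r : ℝ → ℝ), ContDiff ℝ 2 γ →
      (∀ x ∈ Icc (0:ℝ) τ, 0 < r x ∧ deriv γ x = r x * exp (x * I)) →
      kappaH γ θ = (γ θ).im / r θ + Real.cos θ := fun γ r hγ hr =>
    kappaH_eq_of_deriv_eq_mul_exp hθ (uniqueDiffOn_Icc hτ θ hθ) (hγ.differentiable_deriv_two θ)
      (hr θ hθ).1 fun x hx => (hr x hx).2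
  have hvel : ∀ x ∈ Icc (0:ℝ) τ, 0 < (1 - s) * r₀ x + s * r₁ x ∧
      deriv (fun x => (1 - (s:ℂ)) * γ₀ x + (s:ℂ) * γ₁ x) x
        = (((1 - s) * r₀ x + s * r₁ x : ℝ) : ℂ) * exp (x * I) := by
    intro x hx
    refine ⟨one_sub_mul_add_mul_pos hs (hr₀ x hx).1 (hr₁ x hx).1, ?_⟩
    rw [deriv_const_mul_add_const_mul _ _ (hγ₀.differentiable two_ne_zero x)
      (hγ₁.differentiable two_ne_zero x), (hr₀ x hx).2, (hr₁ x hx).2]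
    push_cast
    ring
  have him : ((1 - (s:ℂ)) * γ₀ θ + (s:ℂ) * γ₁ θ).im = (1 - s) * (γ₀ θ).im + s * (γ₁ θ).im := by
    simp
  have hκ₀θ := hκ₀ θ hθ
  have hκ₁θ := hκ₁ θ hθ
  rw [hkappa γ₀ r₀ hγ₀ hr₀] at hκ₀θ
  rw [hkappa γ₁ r₁ hγ₁ hr₁] at hκ₁θ
  rw [hkappa _ _ ((contDiff_const.mul hγ₀).add (contDiff_const.mul hγ₁)) hvel, him]
  exact ⟨him ▸ one_sub_mul_add_mul_pos hs (him₀ θ hθ) (him₁ θ hθ), ⟨_, hvel θ hθ⟩,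
    convex_combination_div_add_mem_Ioo hs (hr₀ θ hθ).1 (hr₁ θ hθ).1 hκ₀θ hκ₁θ⟩

/-- Convex combinations of angle-parametrized curves with curvature in `(κ₁,κ₂)`,
`1 ≤ κ₁`, stay in the upper half-plane, remain regular with the same unit tangent
direction `e^{iθ}`, and keep their curvature in `(κ₁,κ₂)`. -/
theorem convex_combination_disjoint (κ₁ κ₂ : ℝ) (h1 : 1 ≤ κ₁) (h12 : κ₁ < κ₂)
    (τ : ℝ) (hτ : 0 < τ) (γ₀ γ₁ : ℝ → ℂ) (r₀ r₁ : ℝ → ℝ)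
    (hγ₀ : ContDiff ℝ 2 γ₀) (hγ₁ : ContDiff ℝ 2 γ₁)
    (him₀ : ∀ θ ∈ Icc (0:ℝ) τ, 0 < (γ₀ θ).im)
    (him₁ : ∀ θ ∈ Icc (0:ℝ) τ, 0 < (γ₁ θ).im)
    (hr₀ : ∀ θ ∈ Icc (0:ℝ) τ,
      0 < r₀ θ ∧ deriv γ₀ θ = (r₀ θ : ℂ) * Complex.exp (θ * Complex.I))
    (hr₁ : ∀ θ ∈ Icc (0:ℝ) τ,
      0 < r₁ θ ∧ deriv γ₁ θ = (r₁ θ : ℂ) * Complex.exp (θ * Complex.I))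
    (hκ₀ : ∀ θ ∈ Icc (0:ℝ) τ, κ₁ < kappaH γ₀ θ ∧ kappaH γ₀ θ < κ₂)
    (hκ₁ : ∀ θ ∈ Icc (0:ℝ) τ, κ₁ < kappaH γ₁ θ ∧ kappaH γ₁ θ < κ₂) :
    ∀ s ∈ Icc (0:ℝ) 1, ∀ θ ∈ Icc (0:ℝ) τ,
      0 < (((1 - (s:ℂ)) * γ₀ θ + (s:ℂ) * γ₁ θ)).im ∧
      (∃ r : ℝ, 0 < r ∧
        deriv (fun x => (1 - (s:ℂ)) * γ₀ x + (s:ℂ) * γ₁ x) θ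
          = (r : ℂ) * Complex.exp (θ * Complex.I)) ∧
      κ₁ < kappaH (fun x => (1 - (s:ℂ)) * γ₀ x + (s:ℂ) * γ₁ x) θ ∧
      kappaH (fun x => (1 - (s:ℂ)) * γ₀ x + (s:ℂ) * γ₁ x) θ < κ₂ :=
  convex_combination_disjoint_general κ₁ κ₂ τ hτ γ₀ γ₁ r₀ r₁ hγ₀ hγ₁ him₀ him₁ hr₀ hr₁ hκ₀ hκ₁
end

section
/- (Derivative of a median.) Let n ∈ ℕ and let φ₁, …, φ_{2n+1} : ℝ → ℝ be functions, and let φ : ℝ → ℝ be their pointwise median, φ(x) = median(φ₁(x), …, φ_{2n+1}(x)). If at a point x ∈ ℝ each φ_k is differentiable and φ is differentiable, then there exists an index k with φ(x) = φ_k(x) and φ'(x) = φ_k'(x). -/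
/-- The median of `2n+1` real numbers: the `(n+1)`-st smallest element,
i.e. the middle entry of the sorted list. -/
noncomputable def median {n : ℕ} (v : Fin (2 * n + 1) → ℝ) : ℝ :=
  (List.insertionSort (· ≤ ·) (List.ofFn v)).getD n 0

lemma median_mem {n : ℕ} (v : Fin (2 * n + 1) → ℝ) : ∃ k, median v = v k := by
  have hn : n < (List.insertionSort (· ≤ ·) (List.ofFn v)).length := by
    simp only [List.length_insertionSort, List.length_ofFn]; omega
  have hmem : (List.insertionSort (· ≤ ·) (List.ofFn v)).getD n 0 ∈
      List.insertionSort (· ≤ ·) (List.ofFn v) := by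
    rw [List.getD_eq_getElem _ _ hn]
    exact List.getElem_mem hn
  have := (List.perm_insertionSort (· ≤ ·) (List.ofFn v)).mem_iff.mp hmem
  rw [List.mem_ofFn] at this
  obtain ⟨k, hk⟩ := this
  exact ⟨k, hk.symm⟩

/-- If each `φ k` and the pointwise median are differentiable at `x`, then the median
agrees with some `φ k` at `x` both in value and in derivative. -/
theorem median_deriv {n : ℕ} (φ : Fin (2 * n + 1) → ℝ → ℝ) (x : ℝ)
    (hφ : ∀ k, DifferentiableAt ℝ (φ k) x)
    (hm : DifferentiableAt ℝ (fun y => median (fun k => φ k y)) x) :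
    ∃ k, median (fun k => φ k x) = φ k x ∧
      deriv (fun y => median (fun k => φ k y)) x = deriv (φ k) x := by
  set m : ℝ → ℝ := fun y => median (fun k => φ k y) with hm_def
  by_contra h
  push_neg at h
  have key : ∀ k, ∀ᶠ y in nhdsWithin x {x}ᶜ, m y ≠ φ k y := by
    intro k
    by_cases hk : m x = φ k x
    · have hne : deriv m x ≠ deriv (φ k) x := h k hk
      have hg : HasDerivAt (fun y => m y - φ k y) (deriv m x - deriv (φ k) x) x :=
        (hm.hasDerivAt.sub (hφ k).hasDerivAt)
      have hslope := hasDerivAt_iff_tendsto_slope.mp hg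
      have hne0 : (deriv m x - deriv (φ k) x) ≠ 0 := sub_ne_zero.mpr hne
      have hev : ∀ᶠ y in nhdsWithin x {x}ᶜ,
          slope (fun y => m y - φ k y) x y ≠ 0 := hslope.eventually_ne hne0
      filter_upwards [hev, self_mem_nhdsWithin] with y hy hyx
      intro hcontra
      apply hy
      have hy0 : (fun y => m y - φ k y) y = 0 := by simp [hcontra]
      have hx0 : (fun y => m y - φ k y) x = 0 := by simp [hk]
      simp [slope, hy0, hx0]
    · have hc : ContinuousAt (fun y => m y - φ k y) x :=
        (hm.continuousAt.sub (hφ k).continuousAt)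
      have hev : ∀ᶠ y in nhds x, (fun y => m y - φ k y) y ≠ 0 :=
        hc.eventually_ne (sub_ne_zero.mpr hk)
      have : ∀ᶠ y in nhds x, m y ≠ φ k y := by
        filter_upwards [hev] with y hy
        exact fun hcon => hy (by simp [hcon])
      exact this.filter_mono nhdsWithin_le_nhds
  have all : ∀ᶠ y in nhdsWithin x {x}ᶜ, ∀ k, m y ≠ φ k y := Filter.eventually_all.mpr key
  obtain ⟨y, hy⟩ := all.exists
  obtain ⟨k, hk⟩ := median_mem (fun k => φ k y)
  exact hy k hk
end

section
/- (Strict comparison of constant-curvature graphs.) Let −1 ≤ κ < κ' ≤ 1, let a < b be points of (0,π), and let α ∈ ℝ. Suppose g, h : [a,b] → ℝ are C¹ with g(a) = h(a) = α, g'(x) = ψ_κ(x, g(x)) and h'(x) = ψ_{κ'}(x, h(x)) for all x ∈ [a,b]. Then g(x) < h(x) for every x ∈ (a,b]. -/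
open Real Set

/-- The right-hand side of the ODE satisfied by `f = ẏ` along a graph
`x ↦ (x, y(x))` of constant hyperbolic geodesic curvature `κ` in the Mercator model. -/
noncomputable def psiM (κ x z : ℝ) : ℝ :=
  ((1 + z ^ 2) / Real.sin x) * (z * Real.cos x + κ * Real.sqrt (1 + z ^ 2))

lemma psiM_lt_psiM {κ κ' x : ℝ} (hx : 0 < Real.sin x) (hk : κ < κ') (z : ℝ) :
    psiM κ x z < psiM κ' x z := by
  unfold psiM
  have hs : 0 < Real.sqrt (1 + z ^ 2) := Real.sqrt_pos.mpr (by positivity)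
  have hC : 0 < (1 + z ^ 2) / Real.sin x := by positivity
  exact mul_lt_mul_of_pos_left (by nlinarith) hC

lemma pos_right_of_deriv_pos {u : ℝ → ℝ} {c d : ℝ} (hc : u c = 0)
    (hd : HasDerivAt u d c) (hdpos : 0 < d) : ∀ᶠ x in nhdsWithin c (Ioi c), 0 < u x := by
  have hslope : Filter.Tendsto (slope u c) (nhdsWithin c {c}ᶜ) (nhds d) :=
    hasDerivAt_iff_tendsto_slope.mp hd
  have h1 : ∀ᶠ x in nhdsWithin c {c}ᶜ, 0 < slope u c x :=
    hslope.eventually (eventually_gt_nhds hdpos)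
  have h2 : ∀ᶠ x in nhdsWithin c (Ioi c), 0 < slope u c x :=
    (nhdsWithin_mono c (fun x hx => ne_of_gt hx)) h1
  filter_upwards [h2, self_mem_nhdsWithin] with x hx hx'
  have hxc : (0:ℝ) < x - c := sub_pos.mpr hx'
  have h3 : 0 < (u x - u c) / (x - c) := by rwa [slope_def_field] at hx
  rcases div_pos_iff.mp h3 with ⟨h4, h5⟩ | ⟨h4, h5⟩
  · linarith
  · linarith

lemma neg_left_of_deriv_pos {u : ℝ → ℝ} {c d : ℝ} (hc : u c = 0)
    (hd : HasDerivAt u d c) (hdpos : 0 < d) : ∀ᶠ x in nhdsWithin c (Iio c), u x < 0 := by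
  have hslope : Filter.Tendsto (slope u c) (nhdsWithin c {c}ᶜ) (nhds d) :=
    hasDerivAt_iff_tendsto_slope.mp hd
  have h1 : ∀ᶠ x in nhdsWithin c {c}ᶜ, 0 < slope u c x :=
    hslope.eventually (eventually_gt_nhds hdpos)
  have h2 : ∀ᶠ x in nhdsWithin c (Iio c), 0 < slope u c x :=
    (nhdsWithin_mono c (fun x hx => ne_of_lt hx)) h1
  filter_upwards [h2, self_mem_nhdsWithin] with x hx hx'
  have hxc : x - c < 0 := sub_neg.mpr hx'
  have h3 : 0 < (u x - u c) / (x - c) := by rwa [slope_def_field] at hx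
  have := (div_pos_iff).mp h3
  rcases this with ⟨h4, h5⟩ | ⟨h4, h5⟩
  · linarith
  · linarith

/-- Strict comparison of constant-curvature graphs: solutions with the same initial
value and curvatures `κ < κ'` in `[-1,1]` separate strictly to the right. -/
theorem psiM_strict_comparison (κ κ' : ℝ) (h1 : -1 ≤ κ) (h2 : κ < κ') (h3 : κ' ≤ 1)
    (a b : ℝ) (hab : a < b) (ha : a ∈ Ioo (0 : ℝ) π) (hb : b ∈ Ioo (0 : ℝ) π)
    (α : ℝ) (g h : ℝ → ℝ) (hga : g a = α) (hha : h a = α)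
    (hg : ∀ x ∈ Icc a b, HasDerivAt g (psiM κ x (g x)) x)
    (hh : ∀ x ∈ Icc a b, HasDerivAt h (psiM κ' x (h x)) x) :
    ∀ x ∈ Ioc a b, g x < h x := by
  have hsin : ∀ x ∈ Icc a b, 0 < Real.sin x := fun x hx =>
    Real.sin_pos_of_pos_of_lt_pi (lt_of_lt_of_le ha.1 hx.1) (lt_of_le_of_lt hx.2 hb.2)
  set u : ℝ → ℝ := fun x => h x - g x with hu_def
  have hu0 : u a = 0 := by simp [hu_def, hga, hha]
  have hud : ∀ x ∈ Icc a b, HasDerivAt u (psiM κ' x (h x) - psiM κ x (g x)) x :=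
    fun x hx => (hh x hx).sub (hg x hx)
  have key : ∀ x ∈ Icc a b, u x = 0 → 0 < psiM κ' x (h x) - psiM κ x (g x) := by
    intro x hx hux
    have hgh : h x = g x := by simpa [hu_def, sub_eq_zero] using hux
    rw [hgh]
    exact sub_pos.mpr (psiM_lt_psiM (hsin x hx) h2 _)
  -- suffices to show u > 0 on Ioc a b
  suffices hpos : ∀ x ∈ Ioc a b, 0 < u x by
    intro x hx; have := hpos x hx; simp only [hu_def] at this; linarith
  by_contra hcon
  push_neg at hcon
  obtain ⟨x0, hx0, hx0le⟩ := hcon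
  -- set of bad points
  set S : Set ℝ := {x | x ∈ Icc a b ∧ a < x ∧ u x ≤ 0} with hS_def
  have hSne : S.Nonempty := ⟨x0, ⟨le_of_lt hx0.1, hx0.2⟩, hx0.1, hx0le⟩
  have hSbdd : BddBelow S := ⟨a, fun x hx => hx.1.1⟩
  -- near a, u > 0 on the right
  have haIcc : a ∈ Icc a b := ⟨le_refl a, le_of_lt hab⟩
  have hda : 0 < psiM κ' a (h a) - psiM κ a (g a) := key a haIcc hu0
  have hra : ∀ᶠ x in nhdsWithin a (Ioi a), 0 < u x :=
    pos_right_of_deriv_pos hu0 (hud a haIcc) hda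
  obtain ⟨t, hta, htsub⟩ := mem_nhdsGT_iff_exists_Ioo_subset.mp hra
  -- every element of S is ≥ t
  have hSge : ∀ x ∈ S, t ≤ x := by
    intro x hx
    by_contra hlt
    push_neg at hlt
    exact absurd (htsub ⟨hx.2.1, hlt⟩) (not_lt.mpr hx.2.2)
  have hta' : a < t := hta
  have htb : t ≤ b := le_trans (hSge x0 ⟨⟨le_of_lt hx0.1, hx0.2⟩, hx0.1, hx0le⟩) hx0.2
  -- S is closed: S = Icc t b ∩ u⁻¹(Iic 0)
  have hucont : ContinuousOn u (Icc a b) := fun x hx => (hud x hx).continuousAt.continuousWithinAt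
  have hSeq : S = Icc t b ∩ u ⁻¹' (Iic 0) := by
    ext x
    constructor
    · rintro ⟨hx1, hx2, hx3⟩
      exact ⟨⟨hSge x ⟨hx1, hx2, hx3⟩, hx1.2⟩, hx3⟩
    · rintro ⟨⟨hx1, hx2⟩, hx3⟩
      exact ⟨⟨le_trans (le_of_lt hta') hx1, hx2⟩, lt_of_lt_of_le hta' hx1, hx3⟩
  have hSclosed : IsClosed S := by
    rw [hSeq]
    have : ContinuousOn u (Icc t b) :=
      hucont.mono (Icc_subset_Icc (le_of_lt hta') le_rfl)
    exact this.preimage_isClosed_of_isClosed isClosed_Icc isClosed_Iic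
  -- c = first bad point
  set c := sInf S with hc_def
  have hcS : c ∈ S := hSclosed.csInf_mem hSne hSbdd
  have hcIcc : c ∈ Icc a b := hcS.1
  have hac : a < c := hcS.2.1
  have hucneg : u c ≤ 0 := hcS.2.2
  -- u > 0 on Ioo a c
  have hposIoo : ∀ x ∈ Ioo a c, 0 < u x := by
    intro x hx
    by_contra hle
    push_neg at hle
    have hxS : x ∈ S := ⟨⟨le_of_lt hx.1, le_trans (le_of_lt hx.2) hcIcc.2⟩, hx.1, hle⟩
    exact absurd (csInf_le hSbdd hxS) (not_le.mpr hx.2)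
  -- u c ≥ 0 by continuity from the left
  have hccont : ContinuousWithinAt u (Icc a b) c := hucont c hcIcc
  have hne : (nhdsWithin c (Ioo a c)).NeBot := by
    apply mem_closure_iff_nhdsWithin_neBot.mp
    rw [closure_Ioo (ne_of_lt hac)]
    exact ⟨le_of_lt hac, le_refl c⟩
  have hucnonneg : 0 ≤ u c := by
    have htend : Filter.Tendsto u (nhdsWithin c (Ioo a c)) (nhds (u c)) := by
      apply (hccont.mono _).tendsto
      intro x hx
      exact ⟨le_of_lt hx.1, le_trans (le_of_lt hx.2) hcIcc.2⟩
    refine ge_of_tendsto htend ?_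
    filter_upwards [self_mem_nhdsWithin] with x hx using le_of_lt (hposIoo x hx)
  have huc0 : u c = 0 := le_antisymm hucneg hucnonneg
  -- derivative at c is positive, so u < 0 just left of c : contradiction
  have hdc : 0 < psiM κ' c (h c) - psiM κ c (g c) := key c hcIcc huc0
  have hleft : ∀ᶠ x in nhdsWithin c (Iio c), u x < 0 :=
    neg_left_of_deriv_pos huc0 (hud c hcIcc) hdc
  have hleft' : ∀ᶠ x in nhdsWithin c (Ioo a c), u x < 0 :=
    (nhdsWithin_mono c (fun x hx => hx.2)) hleft
  have : ∀ᶠ x in nhdsWithin c (Ioo a c), False := by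
    filter_upwards [hleft', self_mem_nhdsWithin] with x hx hx'
    exact absurd (hposIoo x hx') (not_lt.mpr (le_of_lt hx))
  exact this.exists.choose_spec
end

section
/- (Normal translation in the hyperboloid model.) Let γ : [0,1] → ℝ³ be a C^∞ curve with γ(t) ∈ L and γ'(t) ≠ 0 for all t, and let τ, n, κ be its unit tangent, unit normal and curvature as defined in the context. Let ρ ∈ ℝ and suppose κ(t)·sinh ρ < cosh ρ for all t ∈ [0,1]. Define the normal translation γ_ρ(t) = cosh ρ · γ(t) + sinh ρ · n(t). Then: (i) γ_ρ(t) ∈ L for all t; (ii) γ_ρ'(t) = ‖γ'(t)‖·(cosh ρ − κ(t)·sinh ρ)·τ(t), so γ_ρ is regular and has the same unit tangent τ as γ; and (iii) the curvature of γ_ρ is κ_{γ_ρ}(t) = (κ(t)·cosh ρ − sinh ρ)/(cosh ρ − κ(t)·sinh ρ) for all t. -/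
open Set

/-- The Minkowski bilinear form on `ℝ³`. -/
def mB (x y : Fin 3 → ℝ) : ℝ := -(x 0 * y 0) + x 1 * y 1 + x 2 * y 2

/-- Membership in the hyperboloid model `L`. -/
def onHyperboloid (x : Fin 3 → ℝ) : Prop := mB x x = -1 ∧ 0 < x 0

/-- The matrix `S = diag(-1,1,1)` applied to a vector. -/
def minkS (v : Fin 3 → ℝ) : Fin 3 → ℝ := ![-v 0, v 1, v 2]

/-- The Minkowski norm of a spacelike vector. -/
noncomputable def mNorm (v : Fin 3 → ℝ) : ℝ := Real.sqrt (mB v v)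

/-- Unit tangent of a curve on the hyperboloid. -/
noncomputable def tauL (γ : ℝ → Fin 3 → ℝ) (t : ℝ) : Fin 3 → ℝ :=
  (mNorm (deriv γ t))⁻¹ • deriv γ t

/-- Unit normal of a curve on the hyperboloid: `n = S(γ × τ)`. -/
noncomputable def nL (γ : ℝ → Fin 3 → ℝ) (t : ℝ) : Fin 3 → ℝ :=
  minkS (crossProduct (γ t) (tauL γ t))

/-- Determinant of the `3 × 3` matrix with the given rows (equivalently columns). -/
noncomputable def det3 (a b c : Fin 3 → ℝ) : ℝ := Matrix.det (Matrix.of ![a, b, c])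

/-- Geodesic curvature of a curve on the hyperboloid. -/
noncomputable def kappaL (γ : ℝ → Fin 3 → ℝ) (t : ℝ) : ℝ :=
  det3 (γ t) (deriv γ t) (deriv (deriv γ) t) / mNorm (deriv γ t) ^ 3

/-! ### Pure algebraic lemmas -/

lemma mB_comm (x y : Fin 3 → ℝ) : mB x y = mB y x := by simp [mB]; ring

lemma P1 (x y z w : Fin 3 → ℝ) :
    det3 x y (minkS (crossProduct z w)) = mB x w * mB y z - mB x z * mB y w := by
  simp [det3, Matrix.det_fin_three, mB, minkS, cross_apply]; ring

lemma P2 (x y z w : Fin 3 → ℝ) :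
    det3 (minkS (crossProduct x y)) z w = mB z y * mB w x - mB z x * mB w y := by
  simp [det3, Matrix.det_fin_three, mB, minkS, cross_apply]; ring

lemma lagrange (x y z w : Fin 3 → ℝ) :
    mB (minkS (crossProduct x y)) (minkS (crossProduct z w))
      = mB x w * mB y z - mB x z * mB y w := by
  simp [mB, minkS, cross_apply]; ring

lemma mB_self_TT (x y : Fin 3 → ℝ) : mB x (minkS (crossProduct x y)) = 0 := by
  simp [mB, minkS, cross_apply]; ring

lemma Pmvmp (G V A : Fin 3 → ℝ) :
    det3 (minkS (crossProduct G V)) V (minkS (crossProduct G A))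
      = -(mB G V) * det3 G A V := by
  simp [det3, Matrix.det_fin_three, mB, minkS, cross_apply]; ring

lemma Pmvtva (G V A : Fin 3 → ℝ) :
    det3 (minkS (crossProduct G V)) V (minkS (crossProduct V A))
      = mB V V * det3 G V A := by
  simp [det3, Matrix.det_fin_three, mB, minkS, cross_apply]; ring

lemma Pmvtgj (G V J : Fin 3 → ℝ) :
    det3 (minkS (crossProduct G V)) V (minkS (crossProduct G J))
      = -(mB G V) * det3 G J V := by
  simp [det3, Matrix.det_fin_three, mB, minkS, cross_apply]; ring

lemma Pmpvm (G V A : Fin 3 → ℝ) :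
    det3 (minkS (crossProduct G A)) V (minkS (crossProduct G V))
      = -(mB G V) * det3 G V A := by
  simp [det3, Matrix.det_fin_three, mB, minkS, cross_apply]; ring

lemma Pgmpm (G V A : Fin 3 → ℝ) :
    det3 G (minkS (crossProduct G A)) (minkS (crossProduct G V))
      = -(mB G G) * det3 G A V := by
  simp [det3, Matrix.det_fin_three, mB, minkS, cross_apply]; ring

lemma det3_swap23 (x y z : Fin 3 → ℝ) : det3 x z y = -det3 x y z := by
  simp [det3, Matrix.det_fin_three]; ring

lemma det3_aba (x y : Fin 3 → ℝ) : det3 x y x = 0 := by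
  simp [det3, Matrix.det_fin_three]; ring

lemma gram (x y z : Fin 3 → ℝ) :
    det3 x y z ^ 2 = -(mB x x * (mB y y * mB z z - mB y z ^ 2)
      - mB x y * (mB x y * mB z z - mB y z * mB x z)
      + mB x z * (mB x y * mB y z - mB y y * mB x z)) := by
  simp [det3, Matrix.det_fin_three, mB]; ring

lemma cramer (x y z w : Fin 3 → ℝ) :
    det3 x y z • w = det3 w y z • x + det3 x w z • y + det3 x y w • z := by
  funext i; fin_cases i <;>
    simp [det3, Matrix.det_fin_three, Pi.smul_apply, smul_eq_mul] <;> ring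

lemma det3_smul1 (r : ℝ) (x y z : Fin 3 → ℝ) : det3 (r • x) y z = r * det3 x y z := by
  simp [det3, Matrix.det_fin_three]; ring

lemma det3_smul2 (r : ℝ) (x y z : Fin 3 → ℝ) : det3 x (r • y) z = r * det3 x y z := by
  simp [det3, Matrix.det_fin_three]; ring

lemma det3_smul3 (r : ℝ) (x y z : Fin 3 → ℝ) : det3 x y (r • z) = r * det3 x y z := by
  simp [det3, Matrix.det_fin_three]; ring

lemma det3_add1 (x x' y z : Fin 3 → ℝ) : det3 (x + x') y z = det3 x y z + det3 x' y z := by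
  simp [det3, Matrix.det_fin_three]; ring

lemma det3_add3 (x y z z' : Fin 3 → ℝ) : det3 x y (z + z') = det3 x y z + det3 x y z' := by
  simp [det3, Matrix.det_fin_three]; ring

lemma minkS_zero : minkS 0 = 0 := by
  funext i; fin_cases i <;> simp [minkS]

lemma minkS_smul (r : ℝ) (v : Fin 3 → ℝ) : minkS (r • v) = r • minkS v := by
  funext i; fin_cases i <;> simp [minkS] <;> ring

lemma mB_comb (a b : ℝ) (x y : Fin 3 → ℝ) :
    mB (a • x + b • y) (a • x + b • y)
      = a ^ 2 * mB x x + 2 * (a * b) * mB x y + b ^ 2 * mB y y := by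
  simp [mB]; ring

lemma mB_comb2 (a b : ℝ) (x y z : Fin 3 → ℝ) :
    mB x (a • y + b • z) = a * mB x y + b * mB x z := by
  simp [mB]; ring

lemma keyII (G V A : Fin 3 → ℝ) (R1 : mB G G = -1) (R2 : mB G V = 0)
    (R3 : mB G A = -(mB V V)) :
    mB V V • minkS (crossProduct G A)
      = mB V A • minkS (crossProduct G V) + (-(det3 G V A)) • V := by
  have h0 : det3 G V (minkS (crossProduct G V)) = mB V V := by
    rw [P1, mB_comm V G, R2, R1]; ring
  have h1 : det3 G V (minkS (crossProduct G A)) = mB V A := by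
    rw [P1, mB_comm V G, R2, R3, R1]; ring
  have h2 : det3 (minkS (crossProduct G A)) V (minkS (crossProduct G V)) = 0 := by
    rw [Pmpvm, R2]; ring
  have h3 : det3 G (minkS (crossProduct G A)) (minkS (crossProduct G V))
      = -(det3 G V A) := by
    rw [Pgmpm, R1, det3_swap23]; ring
  calc mB V V • minkS (crossProduct G A)
      = det3 G V (minkS (crossProduct G V)) • minkS (crossProduct G A) := by rw [h0]
    _ = det3 (minkS (crossProduct G A)) V (minkS (crossProduct G V)) • G
        + det3 G (minkS (crossProduct G A)) (minkS (crossProduct G V)) • V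
        + det3 G V (minkS (crossProduct G A)) • minkS (crossProduct G V) :=
        cramer G V (minkS (crossProduct G V)) (minkS (crossProduct G A))
    _ = mB V A • minkS (crossProduct G V) + (-(det3 G V A)) • V := by
        rw [h1, h2, h3]; simp [zero_smul]; rw [add_comm]

lemma keyIII (G V A J : Fin 3 → ℝ) (u c s : ℝ)
    (R1 : mB G G = -1) (R2 : mB G V = 0) (R3 : mB G A = -(mB V V))
    (R4 : mB G J = -(3 * mB V A)) (hu2 : u ^ 2 = mB V V) :
    det3 ((c * u) • G + s • minkS (crossProduct G V)) V
      ((c * u ^ 5) • A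
        + s • ((3 * mB V A ^ 2 - u ^ 2 * (mB A A + mB V J)) • minkS (crossProduct G V)
          + (-(2 * u ^ 2 * mB V A)) • minkS (crossProduct G A)
          + u ^ 4 • (minkS (crossProduct V A) + minkS (crossProduct G J))))
      = u ^ 3 * (det3 G V A * c - s * u ^ 3) * (c * u ^ 3 - det3 G V A * s) := by
  have hK2 : det3 G V A ^ 2 = u ^ 2 * mB A A - mB V A ^ 2 + u ^ 6 := by
    have h := gram G V A
    rw [R1, R2, R3, ← hu2] at h
    linear_combination h
  simp only [smul_add, smul_smul, det3_add1, det3_add3, det3_smul1, det3_smul3]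
  rw [P1 G V G V, P1 G V G A, P1 G V V A, P1 G V G J, P2 G V V A, det3_aba,
    Pmvmp, Pmvtva, Pmvtgj]
  rw [mB_comm V G, mB_comm A G, mB_comm A V] at *
  rw [R1, R2, R3, R4, ← hu2]
  linear_combination (c * s * u ^ 3) * hK2

/-! ### Analytic helper lemmas -/

lemma hasDerivAt_mB' {f g : ℝ → Fin 3 → ℝ} {f' g' : Fin 3 → ℝ} {x : ℝ}
    (hf : HasDerivAt f f' x) (hg : HasDerivAt g g' x) :
    HasDerivAt (fun y => mB (f y) (g y)) (mB f' (g x) + mB (f x) g') x := by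
  have F : ∀ i, HasDerivAt (fun y => f y i) (f' i) x := fun i => hasDerivAt_pi.1 hf i
  have G : ∀ i, HasDerivAt (fun y => g y i) (g' i) x := fun i => hasDerivAt_pi.1 hg i
  have H := (((F 0).fun_mul (G 0)).fun_neg.fun_add ((F 1).fun_mul (G 1))).fun_add ((F 2).fun_mul (G 2))
  refine H.congr_deriv ?_
  simp [mB]; ring

lemma hasDerivAt_TT {f g : ℝ → Fin 3 → ℝ} {f' g' : Fin 3 → ℝ} {x : ℝ}
    (hf : HasDerivAt f f' x) (hg : HasDerivAt g g' x) :
    HasDerivAt (fun y => minkS (crossProduct (f y) (g y)))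
      (minkS (crossProduct f' (g x)) + minkS (crossProduct (f x) g')) x := by
  have F : ∀ i, HasDerivAt (fun y => f y i) (f' i) x := fun i => hasDerivAt_pi.1 hf i
  have G : ∀ i, HasDerivAt (fun y => g y i) (g' i) x := fun i => hasDerivAt_pi.1 hg i
  rw [hasDerivAt_pi]
  intro i
  fin_cases i
  · have H := (((F 1).fun_mul (G 2)).fun_sub ((F 2).fun_mul (G 1))).fun_neg
    convert H using 1
    simp [minkS, cross_apply]
    show (minkS (crossProduct f' (g x)) + minkS (crossProduct (f x) g')) 0 = _
    simp [minkS, cross_apply]; ring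
  · have H := ((F 2).fun_mul (G 0)).fun_sub ((F 0).fun_mul (G 2))
    convert H using 1
    simp [minkS, cross_apply]
    show (minkS (crossProduct f' (g x)) + minkS (crossProduct (f x) g')) 1 = _
    simp [minkS, cross_apply]; ring
  · have H := ((F 0).fun_mul (G 1)).fun_sub ((F 1).fun_mul (G 0))
    convert H using 1
    simp [minkS, cross_apply]
    show (minkS (crossProduct f' (g x)) + minkS (crossProduct (f x) g')) 2 = _
    simp [minkS, cross_apply]; ring


lemma deriv_eq_zero_of_constOn {f : ℝ → ℝ} {t k : ℝ}
    (hf : DifferentiableAt ℝ f t) (h : ∀ x ∈ Icc (0:ℝ) 1, f x = k)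
    (ht : t ∈ Icc (0:ℝ) 1) : deriv f t = 0 := by
  have h1 := hf.derivWithin (uniqueDiffOn_Icc_zero_one t ht)
  rw [← h1, derivWithin_congr (fun x hx => h x hx) (h t ht)]
  exact congrFun (derivWithin_fun_const _ _) _

lemma pos_cone {x y : Fin 3 → ℝ} (hx : mB x x = -1) (hx0 : 0 < x 0)
    (hy : mB y y = -1) (hxy : mB x y ≤ -1) : 0 < y 0 := by
  by_contra h
  push_neg at h
  simp only [mB] at hx hy hxy
  nlinarith [sq_nonneg (x 1 * y 2 - x 2 * y 1), sq_nonneg (x 0 - y 0),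
    sq_nonneg (x 0 * y 0 - 1), sq_nonneg (x 1 * y 1 + x 2 * y 2),
    mul_nonneg hx0.le (neg_nonneg.2 h), sq_nonneg (x 0 + y 0)]

lemma spacelike {G V : Fin 3 → ℝ} (R1 : mB G G = -1) (hG0 : 0 < G 0)
    (R2 : mB G V = 0) (hV : V ≠ 0) : 0 < mB V V := by
  simp only [mB] at R1 R2 ⊢
  have key : G 0 ^ 2 * (-(V 0 * V 0) + V 1 * V 1 + V 2 * V 2)
      = V 1 ^ 2 + V 2 ^ 2 + (G 1 * V 2 - G 2 * V 1) ^ 2 := by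
    linear_combination (-(V 1 ^ 2 + V 2 ^ 2)) * R1
      + (G 0 * V 0 + G 1 * V 1 + G 2 * V 2) * R2
  have hpos : 0 < G 0 ^ 2 := by positivity
  have hnn : 0 ≤ -(V 0 * V 0) + V 1 * V 1 + V 2 * V 2 := by
    nlinarith [sq_nonneg (V 1), sq_nonneg (V 2), sq_nonneg (G 1 * V 2 - G 2 * V 1)]
  rcases hnn.lt_or_eq with h | h
  · exact h
  · exfalso
    apply hV
    have h1 : V 1 ^ 2 = 0 := by nlinarith [sq_nonneg (V 2), sq_nonneg (G 1 * V 2 - G 2 * V 1)]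
    have h2 : V 2 ^ 2 = 0 := by nlinarith [sq_nonneg (V 1), sq_nonneg (G 1 * V 2 - G 2 * V 1)]
    have h1' : V 1 = 0 := sq_eq_zero_iff.mp h1
    have h2' : V 2 = 0 := sq_eq_zero_iff.mp h2
    have h0 : V 0 = 0 := by
      have hx : G 0 * V 0 = 0 := by rw [h1', h2'] at R2; linarith
      rcases mul_eq_zero.1 hx with hc | hc
      · exact absurd hc (ne_of_gt hG0)
      · exact hc
    funext i; fin_cases i <;> simp [h0, h1', h2']

/-! ### Auxiliary functions for the derivative computation -/

noncomputable def rr (γ : ℝ → Fin 3 → ℝ) : ℝ → ℝ := fun y => (mNorm (deriv γ y))⁻¹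
noncomputable def MM (γ : ℝ → Fin 3 → ℝ) : ℝ → Fin 3 → ℝ :=
  fun y => minkS (crossProduct (γ y) (deriv γ y))
noncomputable def MMp (γ : ℝ → Fin 3 → ℝ) : ℝ → Fin 3 → ℝ :=
  fun y => minkS (crossProduct (γ y) (deriv (deriv γ) y))
noncomputable def MMpp (γ : ℝ → Fin 3 → ℝ) : ℝ → Fin 3 → ℝ :=
  fun y => minkS (crossProduct (deriv γ y) (deriv (deriv γ) y))
    + minkS (crossProduct (γ y) (deriv (deriv (deriv γ)) y))
noncomputable def rr1 (γ : ℝ → Fin 3 → ℝ) : ℝ → ℝ :=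
  fun y => -(mB (deriv γ y) (deriv (deriv γ) y)) * (rr γ y) ^ 3
noncomputable def rr2 (γ : ℝ → Fin 3 → ℝ) : ℝ → ℝ :=
  fun y => -(mB (deriv (deriv γ) y) (deriv (deriv γ) y)
      + mB (deriv γ y) (deriv (deriv (deriv γ)) y)) * (rr γ y) ^ 3
    + -(mB (deriv γ y) (deriv (deriv γ) y)) * (3 * (rr γ y) ^ 2 * rr1 γ y)
noncomputable def DD (γ : ℝ → Fin 3 → ℝ) (c s : ℝ) : ℝ → Fin 3 → ℝ :=
  fun y => c • deriv γ y + s • (rr γ y • MMp γ y + rr1 γ y • MM γ y)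
noncomputable def DD2 (γ : ℝ → Fin 3 → ℝ) (c s : ℝ) : ℝ → Fin 3 → ℝ :=
  fun y => c • deriv (deriv γ) y
    + s • ((rr γ y • MMpp γ y + rr1 γ y • MMp γ y)
      + (rr1 γ y • MMp γ y + rr2 γ y • MM γ y))

section
variable {γ : ℝ → Fin 3 → ℝ} {x : ℝ}

lemma hd1 (hγ : ContDiff ℝ (⊤ : ℕ∞) γ) : Differentiable ℝ γ := hγ.differentiable (by simp)
lemma hc1 (hγ : ContDiff ℝ (⊤ : ℕ∞) γ) : ContDiff ℝ ((⊤ : ℕ∞) : WithTop ℕ∞) (deriv γ) :=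
  (contDiff_infty_iff_deriv.mp (hγ.of_le (by simp))).2
lemma hd2 (hγ : ContDiff ℝ (⊤ : ℕ∞) γ) : Differentiable ℝ (deriv γ) :=
  (hc1 hγ).differentiable (by norm_num)
lemma hc2 (hγ : ContDiff ℝ (⊤ : ℕ∞) γ) : ContDiff ℝ ((⊤ : ℕ∞) : WithTop ℕ∞) (deriv (deriv γ)) :=
  (contDiff_infty_iff_deriv.mp (hc1 hγ)).2
lemma hd3 (hγ : ContDiff ℝ (⊤ : ℕ∞) γ) : Differentiable ℝ (deriv (deriv γ)) :=
  (hc2 hγ).differentiable (by norm_num)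

lemma hasDerivAt_MM (hγ : ContDiff ℝ (⊤ : ℕ∞) γ) :
    HasDerivAt (MM γ) (MMp γ x) x := by
  have H := hasDerivAt_TT ((hd1 hγ x).hasDerivAt) ((hd2 hγ x).hasDerivAt)
  rw [cross_self, minkS_zero, zero_add] at H
  exact H

lemma hasDerivAt_MMp (hγ : ContDiff ℝ (⊤ : ℕ∞) γ) :
    HasDerivAt (MMp γ) (MMpp γ x) x := by
  have H := hasDerivAt_TT ((hd1 hγ x).hasDerivAt) ((hd3 hγ x).hasDerivAt)
  exact H

lemma hasDerivAt_rr (hγ : ContDiff ℝ (⊤ : ℕ∞) γ) (hx : 0 < mB (deriv γ x) (deriv γ x)) :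
    HasDerivAt (rr γ) (rr1 γ x) x := by
  have hq' := hasDerivAt_mB' ((hd2 hγ x).hasDerivAt) ((hd2 hγ x).hasDerivAt)
  have hs0 : Real.sqrt (mB (deriv γ x) (deriv γ x)) ≠ 0 :=
    ne_of_gt (Real.sqrt_pos.2 hx)
  have hsq := (Real.hasDerivAt_sqrt (ne_of_gt hx)).comp x hq'
  have H := hsq.fun_inv hs0
  have hsq2 : Real.sqrt (mB (deriv γ x) (deriv γ x)) ^ 2 = mB (deriv γ x) (deriv γ x) :=
    Real.sq_sqrt hx.le
  refine H.congr_deriv ?_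
  simp only [rr1, rr, mNorm, Function.comp]
  rw [mB_comm (deriv (deriv γ) x) (deriv γ x)]
  field_simp
  ring

lemma hasDerivAt_rr1 (hγ : ContDiff ℝ (⊤ : ℕ∞) γ) (hx : 0 < mB (deriv γ x) (deriv γ x)) :
    HasDerivAt (rr1 γ) (rr2 γ x) x := by
  have hb := hasDerivAt_mB' ((hd2 hγ x).hasDerivAt) ((hd3 hγ x).hasDerivAt)
  have H := (hb.fun_neg).fun_mul ((hasDerivAt_rr hγ hx).fun_pow 3)
  exact H.congr_deriv (by simp only [rr2]; push_cast; ring)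

lemma nL_eq (γ : ℝ → Fin 3 → ℝ) (y : ℝ) : nL γ y = rr γ y • MM γ y := by
  simp [nL, tauL, MM, rr, map_smul, minkS_smul]

lemma hasDerivAt_curve (hγ : ContDiff ℝ (⊤ : ℕ∞) γ) (hx : 0 < mB (deriv γ x) (deriv γ x))
    (c s : ℝ) :
    HasDerivAt (fun y => c • γ y + s • nL γ y) (DD γ c s x) x := by
  have H1 : HasDerivAt (fun y => rr γ y • MM γ y)
      (rr γ x • MMp γ x + rr1 γ x • MM γ x) x :=
    (hasDerivAt_rr hγ hx).smul (hasDerivAt_MM hγ)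
  have H := (((hd1 hγ x).hasDerivAt).const_smul c).add (H1.const_smul s)
  have heq : (fun y => c • γ y + s • nL γ y)
      = fun y => c • γ y + s • (rr γ y • MM γ y) := by
    funext y; rw [nL_eq]
  rw [heq]
  exact H

lemma hasDerivAt_DD (hγ : ContDiff ℝ (⊤ : ℕ∞) γ) (hx : 0 < mB (deriv γ x) (deriv γ x))
    (c s : ℝ) :
    HasDerivAt (DD γ c s) (DD2 γ c s x) x := by
  have Ha : HasDerivAt (fun y => rr γ y • MMp γ y)
      (rr γ x • MMpp γ x + rr1 γ x • MMp γ x) x :=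
    (hasDerivAt_rr hγ hx).smul (hasDerivAt_MMp hγ)
  have Hb : HasDerivAt (fun y => rr1 γ y • MM γ y)
      (rr1 γ x • MMp γ x + rr2 γ x • MM γ x) x :=
    (hasDerivAt_rr1 hγ hx).smul (hasDerivAt_MM hγ)
  exact (((hd2 hγ x).hasDerivAt).const_smul c).add ((Ha.add Hb).const_smul s)
end

set_option maxHeartbeats 2000000 in
/-- Normal translation in the hyperboloid model: for `ρ` with
`κ(t)·sinh ρ < cosh ρ`, the curve `γ_ρ = cosh ρ · γ + sinh ρ · n` stays on `L`,
is regular with the same unit tangent, and its curvature is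
`(κ cosh ρ − sinh ρ)/(cosh ρ − κ sinh ρ)`. -/
theorem normal_translation_hyperboloid (γ : ℝ → Fin 3 → ℝ) (hγ : ContDiff ℝ (⊤ : ℕ∞) γ)
    (hL : ∀ t ∈ Icc (0:ℝ) 1, onHyperboloid (γ t))
    (hreg : ∀ t ∈ Icc (0:ℝ) 1, deriv γ t ≠ 0)
    (ρ : ℝ) (hρ : ∀ t ∈ Icc (0:ℝ) 1, kappaL γ t * Real.sinh ρ < Real.cosh ρ) :
    ∀ t ∈ Icc (0:ℝ) 1,
      onHyperboloid (Real.cosh ρ • γ t + Real.sinh ρ • nL γ t) ∧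
      deriv (fun x => Real.cosh ρ • γ x + Real.sinh ρ • nL γ x) t
        = (mNorm (deriv γ t) * (Real.cosh ρ - kappaL γ t * Real.sinh ρ)) • tauL γ t ∧
      kappaL (fun x => Real.cosh ρ • γ x + Real.sinh ρ • nL γ x) t
        = (kappaL γ t * Real.cosh ρ - Real.sinh ρ)
          / (Real.cosh ρ - kappaL γ t * Real.sinh ρ) := by
  have hR1 : ∀ x ∈ Icc (0:ℝ) 1, mB (γ x) (γ x) = -1 := fun x hx => (hL x hx).1
  have hR2 : ∀ x ∈ Icc (0:ℝ) 1, mB (γ x) (deriv γ x) = 0 := by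
    intro x hx
    have hφ := hasDerivAt_mB' ((hd1 hγ x).hasDerivAt) ((hd1 hγ x).hasDerivAt)
    have h0 := deriv_eq_zero_of_constOn hφ.differentiableAt hR1 hx
    rw [hφ.deriv] at h0
    rw [mB_comm (deriv γ x) (γ x)] at h0
    linarith
  have hR3 : ∀ x ∈ Icc (0:ℝ) 1,
      mB (γ x) (deriv (deriv γ) x) = -(mB (deriv γ x) (deriv γ x)) := by
    intro x hx
    have hφ := hasDerivAt_mB' ((hd1 hγ x).hasDerivAt) ((hd2 hγ x).hasDerivAt)
    have h0 := deriv_eq_zero_of_constOn hφ.differentiableAt hR2 hx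
    rw [hφ.deriv] at h0
    linarith
  have hR4 : ∀ x ∈ Icc (0:ℝ) 1,
      mB (γ x) (deriv (deriv (deriv γ)) x)
        = -(3 * mB (deriv γ x) (deriv (deriv γ) x)) := by
    intro x hx
    have hφ := (hasDerivAt_mB' ((hd2 hγ x).hasDerivAt) ((hd2 hγ x).hasDerivAt)).fun_add
      (hasDerivAt_mB' ((hd1 hγ x).hasDerivAt) ((hd3 hγ x).hasDerivAt))
    have h0 := deriv_eq_zero_of_constOn (k := 0) hφ.differentiableAt
      (fun y hy => by have := hR3 y hy; linarith) hx
    rw [hφ.deriv] at h0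
    rw [mB_comm (deriv (deriv γ) x) (deriv γ x)] at h0
    linarith
  have hq : ∀ x ∈ Icc (0:ℝ) 1, 0 < mB (deriv γ x) (deriv γ x) :=
    fun x hx => spacelike (hR1 x hx) (hL x hx).2 (hR2 x hx) (hreg x hx)
  have hqc : Continuous fun y => mB (deriv γ y) (deriv γ y) := by
    have h := (hc1 hγ).continuous
    simp only [mB]
    fun_prop
  have hUopen : IsOpen {y : ℝ | 0 < mB (deriv γ y) (deriv γ y)} :=
    isOpen_lt continuous_const hqc
  intro t ht
  have hqt := hq t ht
  have hUt : {y : ℝ | 0 < mB (deriv γ y) (deriv γ y)} ∈ nhds t := hUopen.mem_nhds hqt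
  set c := Real.cosh ρ with hc_def
  set s := Real.sinh ρ with hs_def
  have hDx : ∀ x ∈ {y : ℝ | 0 < mB (deriv γ y) (deriv γ y)},
      deriv (fun y => c • γ y + s • nL γ y) x = DD γ c s x :=
    fun x hx => (hasDerivAt_curve hγ hx c s).deriv
  have hDt : deriv (fun y => c • γ y + s • nL γ y) t = DD γ c s t := hDx t hqt
  have hEq : deriv (fun y => c • γ y + s • nL γ y) =ᶠ[nhds t] DD γ c s :=
    Filter.eventuallyEq_of_mem hUt hDx
  have hD2t : deriv (deriv (fun y => c • γ y + s • nL γ y)) t = DD2 γ c s t := by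
    rw [hEq.deriv_eq]
    exact (hasDerivAt_DD hγ hqt c s).deriv
  set u := Real.sqrt (mB (deriv γ t) (deriv γ t)) with hu_def
  have hupos : 0 < u := Real.sqrt_pos.2 hqt
  have hu0 : u ≠ 0 := ne_of_gt hupos
  have hu2 : u ^ 2 = mB (deriv γ t) (deriv γ t) := Real.sq_sqrt hqt.le
  have hmN : mNorm (deriv γ t) = u := rfl
  have hrt : rr γ t = u⁻¹ := rfl
  have hκ : kappaL γ t = det3 (γ t) (deriv γ t) (deriv (deriv γ) t) / u ^ 3 := rfl
  have R1t := hR1 t ht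
  have R2t := hR2 t ht
  have R3t := hR3 t ht
  have R4t := hR4 t ht
  have hcs : c ^ 2 - s ^ 2 = 1 := Real.cosh_sq_sub_sinh_sq ρ
  have hρt : kappaL γ t * s < c := hρ t ht
  have he : 0 < c - kappaL γ t * s := by linarith
  -- values of mB products
  have hGM : mB (γ t) (MM γ t) = 0 := mB_self_TT _ _
  have hMM : mB (MM γ t) (MM γ t) = u ^ 2 := by
    rw [MM, lagrange, mB_comm (deriv γ t) (γ t), R2t, R1t, hu2]; ring
  -- membership in L
  have hA : mB (c • γ t + s • nL γ t) (c • γ t + s • nL γ t) = -1 := by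
    rw [nL_eq, hrt, smul_smul, mB_comb]
    rw [R1t, hGM, hMM]
    field_simp
    linear_combination (-u) * hcs
  have hB : 0 < (c • γ t + s • nL γ t) 0 := by
    apply pos_cone R1t (hL t ht).2 hA
    rw [nL_eq, hrt, smul_smul, mB_comb2, R1t, hGM]
    have : 1 ≤ c := Real.one_le_cosh ρ
    nlinarith
  have hmBsmul : ∀ (a : ℝ) (x : Fin 3 → ℝ), mB (a • x) (a • x) = a ^ 2 * mB x x := by
    intro a x; simp [mB]; ring
  have hDDt : DD γ c s t = (c - kappaL γ t * s) • deriv γ t := by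
    have hkey := keyII (γ t) (deriv γ t) (deriv (deriv γ) t) R1t R2t R3t
    funext i
    have hki := congrFun hkey i
    simp only [Pi.add_apply, Pi.smul_apply, smul_eq_mul] at hki
    rw [← hu2] at hki
    simp only [DD, MMp, MM, rr1, rr, hmN, hκ, Pi.add_apply, Pi.smul_apply, smul_eq_mul]
    field_simp
    linear_combination s * hki
  refine ⟨⟨hA, hB⟩, ?_, ?_⟩
  · rw [hDt, hDDt, hmN, tauL, hmN, smul_smul]
    congr 1
    field_simp
  · have hmNDD : mNorm (DD γ c s t) = (c - kappaL γ t * s) * u := by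
      rw [hDDt, mNorm, hmBsmul, ← hu2,
        show (c - kappaL γ t * s) ^ 2 * u ^ 2 = ((c - kappaL γ t * s) * u) ^ 2 by ring,
        Real.sqrt_sq (by positivity)]
    have hX : c • γ t + s • nL γ t
        = u⁻¹ • ((c * u) • γ t + s • minkS (crossProduct (γ t) (deriv γ t))) := by
      funext i
      rw [nL_eq]
      simp only [MM, rr, hmN, Pi.add_apply, Pi.smul_apply, smul_eq_mul]
      field_simp
    have hZ : DD2 γ c s t
        = (u ^ 5)⁻¹ • ((c * u ^ 5) • deriv (deriv γ) t
          + s • ((3 * mB (deriv γ t) (deriv (deriv γ) t) ^ 2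
              - u ^ 2 * (mB (deriv (deriv γ) t) (deriv (deriv γ) t)
                + mB (deriv γ t) (deriv (deriv (deriv γ)) t)))
                • minkS (crossProduct (γ t) (deriv γ t))
            + (-(2 * u ^ 2 * mB (deriv γ t) (deriv (deriv γ) t)))
                • minkS (crossProduct (γ t) (deriv (deriv γ) t))
            + u ^ 4 • (minkS (crossProduct (deriv γ t) (deriv (deriv γ) t))
              + minkS (crossProduct (γ t) (deriv (deriv (deriv γ)) t))))) := by
      funext i
      simp only [DD2, MMpp, MMp, MM, rr2, rr1, rr, hmN, Pi.add_apply, Pi.smul_apply,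
        smul_eq_mul]
      field_simp
      ring
    have hkL : kappaL (fun x => c • γ x + s • nL γ x) t
        = det3 (c • γ t + s • nL γ t) (DD γ c s t) (DD2 γ c s t)
          / mNorm (DD γ c s t) ^ 3 := by
      simp only [kappaL]
      rw [hDt, hD2t]
    rw [hkL, hDDt, det3_smul2, ← hDDt, hX, hZ, det3_smul1, det3_smul3,
      keyIII (γ t) (deriv γ t) (deriv (deriv γ) t) (deriv (deriv (deriv γ)) t) u c s
        R1t R2t R3t R4t hu2, hmNDD]
    have hK : det3 (γ t) (deriv γ t) (deriv (deriv γ) t) = kappaL γ t * u ^ 3 := by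
      rw [hκ]; field_simp
    rw [hK]
    have he' : c - kappaL γ t * s ≠ 0 := ne_of_gt he
    field_simp
end
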